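/- arXiv:2203.12681 — 6 statements merged into one kernel-verified Lean document; each statement's English description precedes it below -/
import Mathlib

section
/- Under the SPS iteration on a nonempty compact convex set Ω ⊆ E, suppose f : E → ℝ is convex and continuous, there is G > 0 with ‖g_k‖ ≤ G for all k ≥ 1, and the approximation errors e_k := sup_{x ∈ Ω} |f_k(x) − f(x)| satisfy e_k → 0 as k → ∞. Then liminf_{k→∞} f(x_k) = f*, where f* = min_{x ∈ Ω} f(x). -/
/-!
Let `y` minimize `f` on `Ω`. If `f (x k) ≥ f y + ε` for all large `k`, then, since `f_k` is
uniformly `ε/4`-close to `f` on `Ω`, the subgradient inequality at `y` gives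
`⟪g k, x k - y⟫ ≥ ε / 2`. Expanding the square in the nonexpansivity estimate then yields
`‖x (k+1) - y‖² ≤ ‖x k - y‖² - a / k + b / k²` with `a > 0`, and summing contradicts the
divergence of the harmonic series. Hence `f (x k) ≤ f y + ε` infinitely often, while
`f (x k) ≥ f y` for all `k ≥ 1`.
-/

open scoped RealInnerProductSpace
open Filter Set

theorem summable_of_descent {d a b : ℕ → ℝ} (hd : ∀ k, 0 ≤ d k) (ha : ∀ k, 0 ≤ a k)
    (hb : Summable b) (hstep : ∀ k, d (k + 1) ≤ d k - a k + b k) : Summable a := by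
  obtain ⟨B, hB⟩ := hb.hasSum.tendsto_sum_nat.bddAbove_range
  refine summable_of_sum_range_le ha (c := d 0 + B) fun m => ?_
  have htelescope : ∑ i ∈ Finset.range m, a i ≤ d 0 - d m + ∑ i ∈ Finset.range m, b i := by
    calc ∑ i ∈ Finset.range m, a i
        ≤ ∑ i ∈ Finset.range m, (d i - d (i + 1) + b i) :=
          Finset.sum_le_sum fun i _ => by linarith [hstep i]
      _ = d 0 - d m + ∑ i ∈ Finset.range m, b i := by
          rw [Finset.sum_add_distrib, Finset.sum_range_sub']
  linarith [hd m, hB ⟨m, rfl⟩]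

theorem summable_of_eventually_descent {d a b : ℕ → ℝ} (hd : ∀ k, 0 ≤ d k)
    (ha : ∀ k, 0 ≤ a k) (hb : Summable b)
    (hstep : ∀ᶠ k in atTop, d (k + 1) ≤ d k - a k + b k) : Summable a := by
  obtain ⟨K, hK⟩ := eventually_atTop.1 hstep
  refine (summable_nat_add_iff K).1 <|
    summable_of_descent (d := fun k => d (k + K)) (fun k => hd _) (fun k => ha _)
      ((summable_nat_add_iff K).2 hb) fun k => ?_
  simpa only [Nat.add_right_comm k 1 K] using hK (k + K) (Nat.le_add_left K k)

section InnerProductSpace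

variable {E : Type*} [NormedAddCommGroup E] [InnerProductSpace ℝ E]

theorem inner_ge_of_subgradient_of_abs_sub_le {φ f : E → ℝ} {g x y : E} {e : ℝ}
    (hsub : φ x + ⟪g, y - x⟫ ≤ φ y) (hx : |φ x - f x| ≤ e) (hy : |φ y - f y| ≤ e) :
    f x - f y - 2 * e ≤ ⟪g, x - y⟫ := by
  rw [← neg_sub x y, inner_neg_right] at hsub
  linarith [(abs_le.1 hx).1, (abs_le.1 hy).2]

theorem sq_norm_sub_le_of_norm_sub_le_step {x x' g y : E} {c cl cu G δ : ℝ}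
    (hstep : ‖x' - y‖ ≤ ‖x - c • g - y‖) (hcl : 0 ≤ cl) (hc : c ∈ Icc cl cu)
    (hg : ‖g‖ ≤ G) (hδ : 0 ≤ δ) (hinner : δ ≤ ⟪g, x - y⟫) :
    ‖x' - y‖ ^ 2 ≤ ‖x - y‖ ^ 2 - 2 * cl * δ + cu ^ 2 * G ^ 2 := by
  have hexpand : ‖x - c • g - y‖ ^ 2 = ‖x - y‖ ^ 2 - 2 * c * ⟪g, x - y⟫ + c ^ 2 * ‖g‖ ^ 2 := by
    rw [sub_right_comm, norm_sub_sq_real, real_inner_smul_right, real_inner_comm, norm_smul,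
      mul_pow, Real.norm_eq_abs, sq_abs]
    ring
  have hdescent : cl * δ ≤ c * ⟪g, x - y⟫ := mul_le_mul hc.1 hinner hδ (hcl.trans hc.1)
  have hc2 : c ^ 2 ≤ cu ^ 2 := pow_le_pow_left₀ (hcl.trans hc.1) hc.2 2
  have hg2 : ‖g‖ ^ 2 ≤ G ^ 2 := pow_le_pow_left₀ (norm_nonneg g) hg 2
  have hnoise : c ^ 2 * ‖g‖ ^ 2 ≤ cu ^ 2 * G ^ 2 :=
    mul_le_mul hc2 hg2 (sq_nonneg _) (sq_nonneg _)
  nlinarith [pow_le_pow_left₀ (norm_nonneg _) hstep 2]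

theorem not_eventually_le_inner_of_norm_sub_le_step {x g : ℕ → E} {y : E} {c : ℕ → ℝ}
    {cl cu G δ : ℝ} (hcl : 0 < cl) (hδ : 0 < δ)
    (hc : ∀ᶠ k : ℕ in atTop, c k ∈ Icc (cl / k) (cu / k)) (hg : ∀ᶠ k in atTop, ‖g k‖ ≤ G)
    (hstep : ∀ᶠ k in atTop, ‖x (k + 1) - y‖ ≤ ‖x k - c k • g k - y‖) :
    ¬ ∀ᶠ k in atTop, δ ≤ ⟪g k, x k - y⟫ := by
  intro hinner
  have hdescent : ∀ᶠ k : ℕ in atTop, ‖x (k + 1) - y‖ ^ 2 ≤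
      ‖x k - y‖ ^ 2 - 2 * cl * δ * (k : ℝ)⁻¹ + cu ^ 2 * G ^ 2 * ((k : ℝ) ^ 2)⁻¹ := by
    filter_upwards [hc, hg, hstep, hinner] with k hck hgk hstepk hinnerk
    have := sq_norm_sub_le_of_norm_sub_le_step hstepk (by positivity) hck hgk hδ.le hinnerk
    convert this using 2 <;> ring
  have hharmonic := summable_of_eventually_descent (fun k => sq_nonneg ‖x k - y‖)
    (fun k => by positivity)
    ((Real.summable_nat_pow_inv.2 one_lt_two).mul_left (cu ^ 2 * G ^ 2)) hdescent
  exact Real.not_summable_natCast_inv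
    ((summable_mul_left_iff (by positivity : 2 * cl * δ ≠ 0)).1 hharmonic)

end InnerProductSpace

theorem liminf_eq_of_frequently_le_add {ι : Type*} {l : Filter ι} [l.NeBot] {u : ι → ℝ}
    {m : ℝ} (hlow : ∀ᶠ k in l, m ≤ u k) (hfreq : ∀ ε > 0, ∃ᶠ k in l, u k ≤ m + ε) :
    liminf u l = m := by
  refine le_antisymm (le_of_forall_pos_le_add fun ε hε => ?_) ?_
  · exact liminf_le_of_frequently_le (hfreq ε hε) ⟨m, hlow⟩
  · exact le_liminf_of_le (IsCoboundedUnder.of_frequently_le (hfreq 1 one_pos)) hlow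

theorem sps_liminf_optimal_general {n : ℕ}
    (Ω : Set (EuclideanSpace ℝ (Fin n)))
    (hΩne : Ω.Nonempty) (hΩcomp : IsCompact Ω)
    (C1 C2 ζlo ζhi : ℝ)
    (hC1 : 0 < C1) (hζlo : 0 < ζlo)
    (x : ℕ → EuclideanSpace ℝ (Fin n)) (hxΩ : ∀ k, 1 ≤ k → x k ∈ Ω)
    (fk : ℕ → EuclideanSpace ℝ (Fin n) → ℝ)
    (hfkconv : ∀ k, ConvexOn ℝ Set.univ (fk k))
    (g : ℕ → EuclideanSpace ℝ (Fin n))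
    (hsub : ∀ k, 1 ≤ k → ∀ z, fk k (x k) + ⟪g k, z - x k⟫ ≤ fk k z)
    (ζ α : ℕ → ℝ)
    (hζ : ∀ k, 1 ≤ k → ζ k ∈ Set.Icc ζlo ζhi)
    (hα : ∀ k : ℕ, 1 ≤ k → α k ∈ Set.Icc (C1 / (k : ℝ)) (C2 / (k : ℝ)))
    (hproj : ∀ k, 1 ≤ k → ∀ y ∈ Ω,
      ‖x (k + 1) - y‖ ≤ ‖(x k - (α k * ζ k) • g k) - y‖)
    (f : EuclideanSpace ℝ (Fin n) → ℝ)
    (hfcont : Continuous f)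
    (G : ℝ) (hgbd : ∀ k, 1 ≤ k → ‖g k‖ ≤ G)
    (e : ℕ → ℝ)
    (he : ∀ k, e k = sSup ((fun z => |fk k z - f z|) '' Ω))
    (helim : Tendsto e atTop (nhds 0)) :
    liminf (fun k => f (x k)) atTop = sInf (f '' Ω) := by
  obtain ⟨y, hyΩ, hymin⟩ := hΩcomp.exists_isMinOn hΩne hfcont.continuousOn
  rw [IsLeast.csInf_eq ⟨mem_image_of_mem f hyΩ, forall_mem_image.2 hymin⟩]
  have herr : ∀ k, ∀ z ∈ Ω, |fk k z - f z| ≤ e k := fun k z hz => by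
    have hfkcont := continuousOn_univ.1 ((hfkconv k).continuousOn isOpen_univ)
    exact he k ▸ le_csSup (hΩcomp.bddAbove_image (hfkcont.sub hfcont).abs.continuousOn)
      (mem_image_of_mem _ hz)
  refine liminf_eq_of_frequently_le_add
    (eventually_atTop.2 ⟨1, fun k hk => hymin (hxΩ k hk)⟩) fun ε hε => ?_
  by_contra hfar
  simp only [not_frequently, not_le] at hfar
  have hstepsize : ∀ᶠ k : ℕ in atTop, α k * ζ k ∈ Icc (C1 * ζlo / k) (C2 * ζhi / k) := by
    filter_upwards [eventually_ge_atTop 1] with k hk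
    obtain ⟨hα1, hα2⟩ := hα k hk
    obtain ⟨hζ1, hζ2⟩ := hζ k hk
    have : 0 < C1 / k := by positivity
    rw [mul_div_right_comm, mul_div_right_comm C2]
    constructor <;> nlinarith
  refine not_eventually_le_inner_of_norm_sub_le_step (mul_pos hC1 hζlo) (half_pos hε) hstepsize
    (eventually_atTop.2 ⟨1, hgbd⟩) (eventually_atTop.2 ⟨1, fun k hk => hproj k hk y hyΩ⟩) ?_
  filter_upwards [hfar, helim.eventually (gt_mem_nhds (by positivity : (0 : ℝ) < ε / 4)),
    eventually_ge_atTop 1] with k hfark hek hk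
  linarith [inner_ge_of_subgradient_of_abs_sub_le (hsub k hk y) (herr k _ (hxΩ k hk))
    (herr k y hyΩ)]

/-- Theorem 1, part 1 (pathwise): under the SPS iteration on a nonempty compact convex
set, with uniformly bounded subgradients and SAA errors tending to zero,
`liminf f(x_k) = f* = min_{Ω} f`. -/
theorem sps_liminf_optimal {n : ℕ}
    (Ω : Set (EuclideanSpace ℝ (Fin n)))
    (hΩne : Ω.Nonempty) (hΩcomp : IsCompact Ω) (hΩconv : Convex ℝ Ω)
    (C1 C2 ζlo ζhi : ℝ)
    (hC1 : 0 < C1) (hC12 : C1 ≤ C2) (hζlo : 0 < ζlo) (hζlohi : ζlo ≤ ζhi)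
    (x : ℕ → EuclideanSpace ℝ (Fin n)) (hxΩ : ∀ k, 1 ≤ k → x k ∈ Ω)
    (fk : ℕ → EuclideanSpace ℝ (Fin n) → ℝ)
    (hfkconv : ∀ k, ConvexOn ℝ Set.univ (fk k))
    (g : ℕ → EuclideanSpace ℝ (Fin n))
    (hsub : ∀ k, 1 ≤ k → ∀ z, fk k (x k) + ⟪g k, z - x k⟫ ≤ fk k z)
    (ζ α : ℕ → ℝ)
    (hζ : ∀ k, 1 ≤ k → ζ k ∈ Set.Icc ζlo ζhi)
    (hα : ∀ k : ℕ, 1 ≤ k → α k ∈ Set.Icc (C1 / (k : ℝ)) (C2 / (k : ℝ)))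
    (hproj : ∀ k, 1 ≤ k → ∀ y ∈ Ω,
      ‖x (k + 1) - y‖ ≤ ‖(x k - (α k * ζ k) • g k) - y‖)
    (f : EuclideanSpace ℝ (Fin n) → ℝ)
    (hfconv : ConvexOn ℝ Set.univ f) (hfcont : Continuous f)
    (G : ℝ) (hG : 0 < G) (hgbd : ∀ k, 1 ≤ k → ‖g k‖ ≤ G)
    (e : ℕ → ℝ)
    (he : ∀ k, e k = sSup ((fun z => |fk k z - f z|) '' Ω))
    (helim : Tendsto e atTop (nhds 0)) :
    liminf (fun k => f (x k)) atTop = sInf (f '' Ω) :=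
  sps_liminf_optimal_general Ω hΩne hΩcomp C1 C2 ζlo ζhi hC1 hζlo x hxΩ fk hfkconv g hsub ζ α hζ hα
    hproj f hfcont G hgbd e he helim
end

section
/- Under the SPS iteration on a nonempty compact convex set Ω ⊆ E, suppose f : E → ℝ is convex and continuous, there is G > 0 with ‖g_k‖ ≤ G for all k ≥ 1, and the approximation errors e_k := sup_{x ∈ Ω} |f_k(x) − f(x)| satisfy Σ_{k≥1} e_k/k < ∞. Then there exists x* ∈ Ω with f(x*) = min_{x ∈ Ω} f(x) such that x_k → x* as k → ∞. -/
/-!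
For every minimizer `z` of `f` on `Ω`, nonexpansivity of the projection and the subgradient
inequality for `f_k`, transferred to `f` at the price `2 e_k`, give with `t_k = α_k ζ_k ≍ 1/k`
  `‖x_{k+1} - z‖² + 2 t_k (f x_k - f z) ≤ ‖x_k - z‖² + 4 t_k e_k + t_k² G²`,
whose perturbation term is summable. Hence `‖x_k - z‖` converges and `∑ (f x_k - f z)/k < ∞`.
As `∑ 1/k` diverges, `f x_k` comes arbitrarily close to `min_Ω f` infinitely often, so by
compactness the iterates have a cluster point `x*` that minimizes `f`. Taking `z = x*`, the
distances `‖x_k - x*‖` converge, and their limit is `0` because `x*` is a cluster point.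
-/

open scoped RealInnerProductSpace Topology
open Filter Set

theorem exists_tendsto_of_succ_le_add {a b : ℕ → ℝ} (ha : BddBelow (range a)) (hb : Summable b)
    (h : ∀ k, a (k + 1) ≤ a k + b k) : ∃ L, Tendsto a atTop (𝓝 L) := by
  set S : ℕ → ℝ := fun k => ∑ j ∈ Finset.range k, b j
  have hS : Tendsto S atTop (𝓝 (∑' j, b j)) := hb.hasSum.tendsto_sum_nat
  have hanti : Antitone (a - S) := antitone_nat_of_succ_le fun k => by
    simp only [Pi.sub_apply, S, Finset.sum_range_succ]
    linarith [h k]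
  have hbdd : BddBelow (range (a - S)) := by
    obtain ⟨m, hm⟩ := ha
    obtain ⟨M, hM⟩ := hS.bddAbove_range
    refine ⟨m - M, ?_⟩
    rintro _ ⟨k, rfl⟩
    linarith [hm ⟨k, rfl⟩, hM ⟨k, rfl⟩, show (a - S) k = a k - S k from rfl]
  exact ⟨_, by simpa using (tendsto_atTop_ciInf hanti hbdd).add hS⟩

theorem summable_of_succ_add_le_add {a u b : ℕ → ℝ} (ha : ∀ k, 0 ≤ a k) (hu : ∀ k, 0 ≤ u k)
    (hb : Summable b) (h : ∀ k, a (k + 1) + u k ≤ a k + b k) : Summable u := by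
  obtain ⟨M, hM⟩ := hb.hasSum.tendsto_sum_nat.bddAbove_range
  have htelescope : ∀ N, a N + ∑ k ∈ Finset.range N, u k ≤ a 0 + ∑ k ∈ Finset.range N, b k := by
    intro N
    induction N with
    | zero => simp
    | succ N ih =>
      rw [Finset.sum_range_succ, Finset.sum_range_succ]
      linarith [h N]
  refine summable_of_sum_range_le (c := a 0 + M) hu fun N => ?_
  linarith [htelescope N, ha N, hM ⟨N, rfl⟩]

theorem frequently_lt_of_summable_div_natCast {D : ℕ → ℝ} (hD : Summable fun k : ℕ => D k / k)
    {ε : ℝ} (hε : 0 < ε) : ∃ᶠ k in atTop, D k < ε := by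
  by_contra hcon
  have hge : ∀ᶠ k : ℕ in cofinite, ‖ε * (1 / (k : ℝ))‖ ≤ D k / k := by
    rw [Nat.cofinite_eq_atTop]
    filter_upwards [not_frequently.1 hcon] with k hk
    rw [Real.norm_of_nonneg (by positivity), mul_one_div]
    exact div_le_div_of_nonneg_right (not_lt.1 hk) k.cast_nonneg
  exact Real.not_summable_one_div_natCast
    ((summable_mul_left_iff hε.ne').1 (hD.of_norm_bounded_eventually hge))

theorem tendsto_of_mapClusterPt_of_tendsto_dist {X : Type*} [PseudoMetricSpace X] {x : ℕ → X}
    {z : X} {L : ℝ} (hL : Tendsto (fun k => dist (x k) z) atTop (𝓝 L))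
    (hz : MapClusterPt z atTop x) : Tendsto x atTop (𝓝 z) := by
  have h0 : MapClusterPt 0 atTop (fun k => dist (x k) z) := by
    simpa [Function.comp_def] using
      hz.continuousAt_comp (continuous_id.dist (continuous_const (y := z))).continuousAt
  obtain rfl : (0 : ℝ) = L := eq_of_nhds_neBot (h0.clusterPt.mono hL)
  exact tendsto_iff_dist_tendsto_zero.2 hL

theorem exists_isMinOn_mapClusterPt_of_summable_div {X : Type*} [PseudoMetricSpace X]
    {Ω : Set X} (hΩ : IsCompact Ω) {x : ℕ → X} (hx : ∀ᶠ k in atTop, x k ∈ Ω) {f : X → ℝ}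
    (hf : Continuous f) {y : X} (hy : IsMinOn f Ω y)
    (hs : Summable fun k : ℕ => (f (x k) - f y) / k) :
    ∃ z ∈ Ω, IsMinOn f Ω z ∧ MapClusterPt z atTop x := by
  have hfreq : ∀ m : ℕ, ∃ᶠ k in atTop, x k ∈ Ω ∧ f (x k) - f y < 1 / (m + 1) := fun m =>
    hx.and_frequently (frequently_lt_of_summable_div_natCast hs (by positivity))
  obtain ⟨φ, hφ, hφΩ⟩ := extraction_forall_of_frequently hfreq
  obtain ⟨z, hzΩ, ψ, hψ, hlim⟩ := hΩ.tendsto_subseq (x := x ∘ φ) fun m => (hφΩ m).1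
  have hfφ : Tendsto (fun m => f (x (φ m))) atTop (𝓝 (f y)) := by
    refine tendsto_of_tendsto_of_tendsto_of_le_of_le tendsto_const_nhds
      (by simpa using tendsto_one_div_add_atTop_nhds_zero_nat.const_add (f y))
      (fun m => hy (hφΩ m).1) (fun m => ?_)
    have := (hφΩ m).2
    rw [one_div] at this
    linarith
  have hfz : f z = f y := tendsto_nhds_unique ((hf.tendsto z).comp hlim) (hfφ.comp hψ.tendsto_atTop)
  refine ⟨z, hzΩ, isMinOn_iff.2 fun w hw => hfz ▸ hy hw, ?_⟩
  exact (hlim.mapClusterPt).of_comp (hφ.comp hψ).tendsto_atTop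

section subgradientStep

variable {E : Type*} [NormedAddCommGroup E] [InnerProductSpace ℝ E]

theorem norm_sub_sq_add_le_of_subgradient_step {h : E → ℝ} {x x' g z : E} {t : ℝ} (ht : 0 ≤ t)
    (hg : h x + ⟪g, z - x⟫ ≤ h z) (hx' : ‖x' - z‖ ≤ ‖x - t • g - z‖) :
    ‖x' - z‖ ^ 2 + 2 * t * (h x - h z) ≤ ‖x - z‖ ^ 2 + t ^ 2 * ‖g‖ ^ 2 := by
  have hexpand : ‖x - t • g - z‖ ^ 2 = ‖x - z‖ ^ 2 - 2 * t * ⟪g, x - z⟫ + t ^ 2 * ‖g‖ ^ 2 := by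
    rw [show x - t • g - z = (x - z) - t • g by abel, norm_sub_sq_real, real_inner_smul_right,
      real_inner_comm, norm_smul, mul_pow, Real.norm_eq_abs, sq_abs]
    ring
  have hlin : h x - h z ≤ ⟪g, x - z⟫ := by
    rw [← neg_sub z x, inner_neg_right]
    linarith
  nlinarith [pow_le_pow_left₀ (norm_nonneg _) hx' 2, mul_le_mul_of_nonneg_left hlin ht]

theorem norm_sub_sq_add_le_of_approx_subgradient_step {f h : E → ℝ} {x x' g z : E} {t e : ℝ}
    (ht : 0 ≤ t) (hg : h x + ⟪g, z - x⟫ ≤ h z) (hx' : ‖x' - z‖ ≤ ‖x - t • g - z‖)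
    (hex : |h x - f x| ≤ e) (hez : |h z - f z| ≤ e) :
    ‖x' - z‖ ^ 2 + 2 * t * (f x - f z) ≤ ‖x - z‖ ^ 2 + (4 * t * e + t ^ 2 * ‖g‖ ^ 2) := by
  have hfh : f x - f z ≤ h x - h z + 2 * e := by
    linarith [(abs_le.1 hex).1, (abs_le.1 hez).2]
  nlinarith [norm_sub_sq_add_le_of_subgradient_step ht hg hx', mul_le_mul_of_nonneg_left hfh ht]

end subgradientStep

theorem sps_quasiFejer {E : Type*} [NormedAddCommGroup E] [InnerProductSpace ℝ E] {Ω : Set E}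
    {x g : ℕ → E} {fk : ℕ → E → ℝ} {f : E → ℝ} {t e : ℕ → ℝ} {c₁ c₂ G : ℝ} (hc₁ : 0 < c₁)
    (hxΩ : ∀ k, 1 ≤ k → x k ∈ Ω) (hsub : ∀ k, 1 ≤ k → ∀ z, fk k (x k) + ⟪g k, z - x k⟫ ≤ fk k z)
    (ht : ∀ k : ℕ, 1 ≤ k → t k ∈ Icc (c₁ / k) (c₂ / k))
    (hproj : ∀ k, 1 ≤ k → ∀ y ∈ Ω, ‖x (k + 1) - y‖ ≤ ‖x k - t k • g k - y‖)
    (hgbd : ∀ k, 1 ≤ k → ‖g k‖ ≤ G) (herr : ∀ k, ∀ z ∈ Ω, |fk k z - f z| ≤ e k)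
    (hesum : Summable fun k : ℕ => e k / k) {z : E} (hz : z ∈ Ω) (hmin : IsMinOn f Ω z) :
    (∃ L, Tendsto (fun k => dist (x k) z) atTop (𝓝 L)) ∧
      Summable fun k : ℕ => (f (x k) - f z) / k := by
  set b : ℕ → ℝ := fun k => 4 * c₂ * (e k / k) + (c₂ * G) ^ 2 * (1 / (k : ℝ) ^ 2)
  have hb : Summable b :=
    (hesum.mul_left _).add ((Real.summable_one_div_nat_pow.2 one_lt_two).mul_left _)
  have hgap : ∀ k, 1 ≤ k → 0 ≤ f (x k) - f z := fun k hk => sub_nonneg.2 (hmin (hxΩ k hk))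
  have hstep : ∀ k, 1 ≤ k →
      ‖x (k + 1) - z‖ ^ 2 + 2 * c₁ * ((f (x k) - f z) / k) ≤ ‖x k - z‖ ^ 2 + b k := by
    intro k hk
    obtain ⟨htlo, hthi⟩ := ht k hk
    have ht0 : 0 ≤ t k := le_trans (by positivity) htlo
    have he : 0 ≤ e k := (abs_nonneg _).trans (herr k z hz)
    have hdescent : c₁ * ((f (x k) - f z) / k) ≤ t k * (f (x k) - f z) := by
      calc c₁ * ((f (x k) - f z) / k) = c₁ / k * (f (x k) - f z) := by ring
        _ ≤ t k * (f (x k) - f z) := mul_le_mul_of_nonneg_right htlo (hgap k hk)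
    have hnoise : 4 * t k * e k + t k ^ 2 * ‖g k‖ ^ 2 ≤ b k := by
      have hsq : t k ^ 2 * ‖g k‖ ^ 2 ≤ (c₂ / k) ^ 2 * G ^ 2 :=
        mul_le_mul (pow_le_pow_left₀ ht0 hthi 2) (pow_le_pow_left₀ (norm_nonneg _) (hgbd k hk) 2)
          (by positivity) (by positivity)
      have hlin : t k * e k ≤ c₂ / k * e k := mul_le_mul_of_nonneg_right hthi he
      have hb_eq : b k = 4 * (c₂ / k * e k) + (c₂ / k) ^ 2 * G ^ 2 := by simp only [b]; ring
      linarith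
    linarith [norm_sub_sq_add_le_of_approx_subgradient_step ht0 (hsub k hk z) (hproj k hk z hz)
      (herr k _ (hxΩ k hk)) (herr k z hz)]
  have hb' : Summable fun m => b (m + 1) := (summable_nat_add_iff 1).2 hb
  have hu : ∀ m : ℕ, 0 ≤ 2 * c₁ * ((f (x (m + 1)) - f z) / (m + 1 : ℕ)) := fun m => by
    have := hgap (m + 1) (by omega)
    positivity
  constructor
  · obtain ⟨L, hL⟩ := exists_tendsto_of_succ_le_add (a := fun m => ‖x (m + 1) - z‖ ^ 2)
      ⟨0, by rintro _ ⟨m, rfl⟩; positivity⟩ hb' fun m => by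
        linarith [hstep (m + 1) (by omega), hu m]
    refine ⟨√L, (tendsto_add_atTop_iff_nat 1).1 ?_⟩
    simpa [dist_eq_norm, Real.sqrt_sq (norm_nonneg _)] using hL.sqrt
  · have hsum := summable_of_succ_add_le_add (a := fun m => ‖x (m + 1) - z‖ ^ 2)
      (fun m => by positivity) hu hb' fun m => hstep (m + 1) (by omega)
    exact (summable_mul_left_iff (by positivity)).1 ((summable_nat_add_iff 1).1 hsum)

theorem sps_convergence_to_solution_general {n : ℕ}
    (Ω : Set (EuclideanSpace ℝ (Fin n)))
    (hΩne : Ω.Nonempty) (hΩcomp : IsCompact Ω)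
    (C1 C2 ζlo ζhi : ℝ)
    (hC1 : 0 < C1) (hζlo : 0 < ζlo)
    (x : ℕ → EuclideanSpace ℝ (Fin n)) (hxΩ : ∀ k, 1 ≤ k → x k ∈ Ω)
    (fk : ℕ → EuclideanSpace ℝ (Fin n) → ℝ)
    (hfkconv : ∀ k, ConvexOn ℝ Set.univ (fk k))
    (g : ℕ → EuclideanSpace ℝ (Fin n))
    (hsub : ∀ k, 1 ≤ k → ∀ z, fk k (x k) + ⟪g k, z - x k⟫ ≤ fk k z)
    (ζ α : ℕ → ℝ)
    (hζ : ∀ k, 1 ≤ k → ζ k ∈ Set.Icc ζlo ζhi)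
    (hα : ∀ k : ℕ, 1 ≤ k → α k ∈ Set.Icc (C1 / (k : ℝ)) (C2 / (k : ℝ)))
    (hproj : ∀ k, 1 ≤ k → ∀ y ∈ Ω,
      ‖x (k + 1) - y‖ ≤ ‖(x k - (α k * ζ k) • g k) - y‖)
    (f : EuclideanSpace ℝ (Fin n) → ℝ)
    (hfcont : Continuous f)
    (G : ℝ) (hgbd : ∀ k, 1 ≤ k → ‖g k‖ ≤ G)
    (e : ℕ → ℝ)
    (he : ∀ k, e k = sSup ((fun z => |fk k z - f z|) '' Ω))
    (hesum : Summable (fun k : ℕ => e k / k)) :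
    ∃ xstar ∈ Ω, f xstar = sInf (f '' Ω) ∧ Tendsto x atTop (nhds xstar) := by
  have herr : ∀ k, ∀ z ∈ Ω, |fk k z - f z| ≤ e k := fun k z hz => by
    have hfk : Continuous (fk k) := continuousOn_univ.1 ((hfkconv k).continuousOn isOpen_univ)
    rw [he k]
    exact le_csSup (hΩcomp.bddAbove_image ((hfk.sub hfcont).abs.continuousOn)) ⟨z, hz, rfl⟩
  have hstepsize : ∀ k : ℕ, 1 ≤ k → α k * ζ k ∈ Icc (C1 * ζlo / k) (C2 * ζhi / k) := by
    intro k hk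
    obtain ⟨hαlo, hαhi⟩ := hα k hk
    obtain ⟨hζlo', hζhi'⟩ := hζ k hk
    have hα0 : 0 ≤ α k := le_trans (by positivity) hαlo
    rw [mul_div_right_comm, mul_div_right_comm C2]
    exact ⟨mul_le_mul hαlo hζlo' hζlo.le hα0,
      mul_le_mul hαhi hζhi' (hζlo.le.trans hζlo') (hα0.trans hαhi)⟩
  have hfejer := fun z (hz : z ∈ Ω) (hmin : IsMinOn f Ω z) =>
    sps_quasiFejer (by positivity) hxΩ hsub hstepsize hproj hgbd herr hesum hz hmin
  obtain ⟨y, hyΩ, hy⟩ := hΩcomp.exists_isMinOn hΩne hfcont.continuousOn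
  obtain ⟨xstar, hxΩstar, hmin, hclus⟩ := exists_isMinOn_mapClusterPt_of_summable_div hΩcomp
    (eventually_atTop.2 ⟨1, hxΩ⟩) hfcont hy (hfejer y hyΩ hy).2
  obtain ⟨L, hL⟩ := (hfejer xstar hxΩstar hmin).1
  exact ⟨xstar, hxΩstar, ((hmin.isGLB hxΩstar).csInf_eq (hΩne.image f)).symm,
    tendsto_of_mapClusterPt_of_tendsto_dist hL hclus⟩

/-- Theorem 1, part 2 (pathwise): under the SPS iteration on a nonempty compact convex
set, with uniformly bounded subgradients and summable weighted SAA errors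
`Σ e_k/k < ∞`, the iterates converge to a minimizer of `f` on `Ω`. -/
theorem sps_convergence_to_solution {n : ℕ}
    (Ω : Set (EuclideanSpace ℝ (Fin n)))
    (hΩne : Ω.Nonempty) (hΩcomp : IsCompact Ω) (hΩconv : Convex ℝ Ω)
    (C1 C2 ζlo ζhi : ℝ)
    (hC1 : 0 < C1) (hC12 : C1 ≤ C2) (hζlo : 0 < ζlo) (hζlohi : ζlo ≤ ζhi)
    (x : ℕ → EuclideanSpace ℝ (Fin n)) (hxΩ : ∀ k, 1 ≤ k → x k ∈ Ω)
    (fk : ℕ → EuclideanSpace ℝ (Fin n) → ℝ)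
    (hfkconv : ∀ k, ConvexOn ℝ Set.univ (fk k))
    (g : ℕ → EuclideanSpace ℝ (Fin n))
    (hsub : ∀ k, 1 ≤ k → ∀ z, fk k (x k) + ⟪g k, z - x k⟫ ≤ fk k z)
    (ζ α : ℕ → ℝ)
    (hζ : ∀ k, 1 ≤ k → ζ k ∈ Set.Icc ζlo ζhi)
    (hα : ∀ k : ℕ, 1 ≤ k → α k ∈ Set.Icc (C1 / (k : ℝ)) (C2 / (k : ℝ)))
    (hproj : ∀ k, 1 ≤ k → ∀ y ∈ Ω,
      ‖x (k + 1) - y‖ ≤ ‖(x k - (α k * ζ k) • g k) - y‖)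
    (f : EuclideanSpace ℝ (Fin n) → ℝ)
    (hfconv : ConvexOn ℝ Set.univ f) (hfcont : Continuous f)
    (G : ℝ) (hG : 0 < G) (hgbd : ∀ k, 1 ≤ k → ‖g k‖ ≤ G)
    (e : ℕ → ℝ)
    (he : ∀ k, e k = sSup ((fun z => |fk k z - f z|) '' Ω))
    (hesum : Summable (fun k : ℕ => e k / k)) :
    ∃ xstar ∈ Ω, f xstar = sInf (f '' Ω) ∧ Tendsto x atTop (nhds xstar) :=
  sps_convergence_to_solution_general Ω hΩne hΩcomp C1 C2 ζlo ζhi hC1 hζlo x hxΩ fk hfkconv g hsub ζ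
    α hζ hα hproj f hfcont G hgbd e he hesum
end

section
/- Under the SPS iteration on a nonempty compact convex set Ω ⊆ E, suppose f : E → ℝ is convex and there exists K ∈ ℕ such that f_k = f for all k ≥ K (the full sample is eventually reached and retained). Then the sequence x_k converges to some x* ∈ Ω with f(x*) = min_{x ∈ Ω} f(x). -/
/-!
With `c_k = α_k ζ_k ∈ [C₁ζ̲/k, C₂ζ̄/k]` and `G` a bound for the subgradients of `f` on `Ω`
(finite because `f` is bounded on a compact neighbourhood of `Ω`), the projected step gives,
for every `y ∈ Ω` and large `k`,
`‖x_{k+1} - y‖² ≤ ‖x_k - y‖² - 2 c_k (f x_k - f y) + c_k² G²`.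
At a minimizer `y*` the errors `c_k² G²` are summable, so `∑ c_k (f x_k - f y*) < ∞`; as
`∑ c_k = ∞`, `f x_k` comes arbitrarily close to `min f` infinitely often, and a cluster point
`x*` of such iterates is a minimizer. At `y = x*` the inequality says `‖x_k - x*‖²` decreases up
to summable errors, and since it is small infinitely often, it tends to `0`.
-/

open scoped RealInnerProductSpace
open Filter Finset Topology

section Telescoping

variable {a w e : ℕ → ℝ}

theorem add_sum_range_le_of_le_add (h : ∀ i, a (i + 1) + w i ≤ a i + e i) (m : ℕ) :
    a m + ∑ i ∈ range m, w i ≤ a 0 + ∑ i ∈ range m, e i := by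
  have hsum := sum_le_sum fun i (_ : i ∈ range m) => h i
  have htele := sum_range_sub a m
  rw [sum_add_distrib, sum_add_distrib] at hsum
  rw [sum_sub_distrib] at htele
  linarith

theorem summable_of_le_add (ha : ∀ i, 0 ≤ a i) (hw : ∀ i, 0 ≤ w i) (he : ∀ i, 0 ≤ e i)
    (hes : Summable e) (h : ∀ i, a (i + 1) + w i ≤ a i + e i) : Summable w :=
  summable_of_sum_range_le (c := a 0 + ∑' i, e i) hw fun m => by
    have := add_sum_range_le_of_le_add h m
    have := hes.sum_le_tsum (range m) fun i _ => he i
    linarith [ha m]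

end Telescoping

theorem frequently_lt_of_summable_mul {c b : ℕ → ℝ} (hc : ∀ i, 0 ≤ c i) (hcs : ¬Summable c)
    (hs : Summable fun i => c i * b i) {ε : ℝ} (hε : 0 < ε) : ∃ᶠ i in atTop, b i < ε := by
  by_contra h
  rw [not_frequently] at h
  refine hcs (.of_norm_bounded_eventually_nat (hs.div_const ε) ?_)
  filter_upwards [h] with i hi
  rw [Real.norm_of_nonneg (hc i), le_div_iff₀ hε]
  exact mul_le_mul_of_nonneg_left (not_lt.1 hi) (hc i)

theorem not_summable_of_div_le {c : ℕ → ℝ} {a : ℝ} (ha : 0 < a)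
    (h : ∀ᶠ k in atTop, a / k ≤ c k) : ¬Summable c := fun hc =>
  Real.not_summable_one_div_natCast <| .of_norm_bounded_eventually_nat (hc.div_const a) <| by
    filter_upwards [h] with k hk
    rw [Real.norm_of_nonneg (by positivity), le_div_iff₀ ha, one_div_mul_eq_div]
    exact hk

theorem summable_sq_of_le_div {c : ℕ → ℝ} {b : ℝ} (hc : ∀ᶠ k in atTop, 0 ≤ c k ∧ c k ≤ b / k) :
    Summable fun k => c k ^ 2 :=
  have hinv_sq := (Real.summable_one_div_nat_pow.2 one_lt_two).mul_left (b ^ 2)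
  .of_norm_bounded_eventually_nat hinv_sq <| by
    filter_upwards [hc] with k ⟨h0, hb⟩
    rw [Real.norm_of_nonneg (sq_nonneg _), ← div_eq_mul_one_div, ← div_pow]
    exact pow_le_pow_left₀ h0 hb 2

theorem mul_mem_Icc_div {a b a' b' s t d : ℝ} (hd : 0 < d) (ha : 0 < a) (ha' : 0 ≤ a')
    (hs : s ∈ Set.Icc (a / d) (b / d)) (ht : t ∈ Set.Icc a' b') :
    s * t ∈ Set.Icc (a * a' / d) (b * b' / d) := by
  have hs0 : 0 ≤ s := (div_pos ha hd).le.trans hs.1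
  rw [mul_div_right_comm, mul_div_right_comm]
  exact ⟨mul_le_mul hs.1 ht.1 ha' hs0, mul_le_mul hs.2 ht.2 (ha'.trans ht.1) (hs0.trans hs.2)⟩

section Convergence

variable {E : Type*} [PseudoMetricSpace E] {x : ℕ → E} {e : ℕ → ℝ}

theorem tendsto_of_mapClusterPt_of_dist_sq_le {xs : E} (hxs : MapClusterPt xs atTop x)
    (he : ∀ i, 0 ≤ e i) (hes : Summable e)
    (h : ∀ i, dist (x (i + 1)) xs ^ 2 ≤ dist (x i) xs ^ 2 + e i) : Tendsto x atTop (𝓝 xs) := by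
  rw [Metric.tendsto_atTop]
  intro ε hε
  have hδ : 0 < ε ^ 2 / 2 := by positivity
  have hnear : ∃ᶠ m in atTop, dist (x m) xs ^ 2 < ε ^ 2 / 2 :=
    (mapClusterPt_iff_frequently.1 hxs _ (Metric.ball_mem_nhds xs (Real.sqrt_pos.2 hδ))).mono
      fun m hm => (Real.lt_sqrt dist_nonneg).1 hm
  obtain ⟨m, hm, htail⟩ :=
    (hnear.and_eventually ((tendsto_sum_nat_add e).eventually_lt_const hδ)).exists
  refine ⟨m, fun k hk => ?_⟩
  obtain ⟨i, rfl⟩ := Nat.exists_eq_add_of_le' hk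
  have hle := add_sum_range_le_of_le_add (a := fun j => dist (x (j + m)) xs ^ 2) (w := 0)
    (e := fun j => e (j + m)) (fun j => by simpa [add_right_comm j 1 m] using h (j + m)) i
  have htsum := ((summable_nat_add_iff m).2 hes).sum_le_tsum (range i) fun j _ => he (j + m)
  simp only [Pi.zero_apply, sum_const_zero, add_zero, zero_add] at hle
  exact lt_of_pow_lt_pow_left₀ 2 hε.le (by linarith)

theorem exists_isMinOn_tendsto_of_dist_sq_le {Ω : Set E} {f : E → ℝ} {c : ℕ → ℝ}
    (hΩ : IsCompact Ω) (hf : ContinuousOn f Ω) (hx : ∀ i, x i ∈ Ω) (hc : ∀ i, 0 ≤ c i)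
    (hcs : ¬Summable c) (he : ∀ i, 0 ≤ e i) (hes : Summable e)
    (hstep : ∀ i, ∀ y ∈ Ω,
      dist (x (i + 1)) y ^ 2 ≤ dist (x i) y ^ 2 - 2 * c i * (f (x i) - f y) + e i) :
    ∃ xs ∈ Ω, IsMinOn f Ω xs ∧ Tendsto x atTop (𝓝 xs) := by
  obtain ⟨ys, hys, hmin⟩ := hΩ.exists_isMinOn ⟨x 0, hx 0⟩ hf
  have hgap : ∀ i, 0 ≤ f (x i) - f ys := fun i => sub_nonneg.2 (hmin (hx i))
  have hsum : Summable fun i => 2 * c i * (f (x i) - f ys) :=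
    summable_of_le_add (a := fun i => dist (x i) ys ^ 2) (fun i => sq_nonneg _)
      (fun i => by have := hc i; have := hgap i; positivity) he hes
      (fun i => by linarith [hstep i ys hys])
  have hfreq (j : ℕ) : ∃ᶠ i in atTop, f (x i) - f ys < 1 / (j + 1) :=
    frequently_lt_of_summable_mul (fun i => by linarith [hc i])
      ((summable_mul_left_iff two_ne_zero).not.2 hcs) hsum (by positivity)
  obtain ⟨φ, hφ, hφf⟩ := extraction_forall_of_frequently hfreq
  obtain ⟨xs, hxs, ψ, hψ, hlim⟩ := hΩ.tendsto_subseq fun j => hx (φ j)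
  have hfxs : f xs ≤ f ys := by
    have hval : Tendsto (fun j => f (x (φ (ψ j)))) atTop (𝓝 (f xs)) :=
      (hf xs hxs).tendsto.comp (tendsto_nhdsWithin_iff.2 ⟨hlim, .of_forall fun j => hx _⟩)
    have hbound : Tendsto (fun j => f ys + 1 / ((ψ j : ℝ) + 1)) atTop (𝓝 (f ys + 0)) :=
      tendsto_const_nhds.add (tendsto_one_div_add_atTop_nhds_zero_nat.comp hψ.tendsto_atTop)
    rw [add_zero] at hbound
    exact le_of_tendsto_of_tendsto hval hbound (.of_forall fun j => by linarith [hφf (ψ j)])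
  have hxs_min : IsMinOn f Ω xs := fun y hy => hfxs.trans (hmin hy)
  refine ⟨xs, hxs, hxs_min, tendsto_of_mapClusterPt_of_dist_sq_le ?_ he hes fun i => ?_⟩
  · exact hlim.mapClusterPt.of_comp (hφ.comp hψ).tendsto_atTop
  · have := hstep i xs hxs
    have := mul_nonneg (hc i) (sub_nonneg.2 (hxs_min (hx i)))
    linarith

end Convergence

section Subgradient

variable {E : Type*} [NormedAddCommGroup E] [InnerProductSpace ℝ E] {f : E → ℝ} {g p : E}

def HasSubgradientAt (f : E → ℝ) (g p : E) : Prop :=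
  ∀ z, f p + ⟪g, z - p⟫ ≤ f z

theorem HasSubgradientAt.norm_le (hg : HasSubgradientAt f g p) :
    ‖g‖ ≤ f (p + ‖g‖⁻¹ • g) - f p := by
  have h := hg (p + ‖g‖⁻¹ • g)
  rw [add_sub_cancel_left, real_inner_smul_right, real_inner_self_eq_norm_sq, sq, ← mul_assoc,
    inv_mul_mul_self] at h
  linarith

theorem exists_norm_le_of_hasSubgradientAt [ProperSpace E] {Ω : Set E} (hf : Continuous f)
    (hΩ : IsCompact Ω) : ∃ G, ∀ p ∈ Ω, ∀ g, HasSubgradientAt f g p → ‖g‖ ≤ G := by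
  obtain ⟨M, hM⟩ := (hΩ.cthickening (r := 1)).exists_bound_of_continuousOn hf.continuousOn
  refine ⟨2 * M, fun p hp g hg => ?_⟩
  have hunit : ‖‖g‖⁻¹ • g‖ ≤ 1 := by
    rw [norm_smul, norm_inv, norm_norm]
    exact inv_mul_le_one_of_le₀ le_rfl (norm_nonneg _)
  have hz : p + ‖g‖⁻¹ • g ∈ Metric.cthickening 1 Ω :=
    Metric.mem_cthickening_of_dist_le _ p 1 Ω hp (by rwa [dist_self_add_left])
  have h1 := abs_le.1 (hM _ hz)
  have h2 := abs_le.1 (hM p (Metric.self_subset_cthickening Ω hp))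
  linarith [hg.norm_le]

theorem HasSubgradientAt.sq_norm_sub_le_of_norm_le {c : ℝ} {x' y : E}
    (hg : HasSubgradientAt f g p) (hc : 0 ≤ c) (hx' : ‖x' - y‖ ≤ ‖p - c • g - y‖) :
    ‖x' - y‖ ^ 2 ≤ ‖p - y‖ ^ 2 - 2 * c * (f p - f y) + c ^ 2 * ‖g‖ ^ 2 := by
  have hexpand : ‖p - c • g - y‖ ^ 2 = ‖p - y‖ ^ 2 - 2 * c * ⟪p - y, g⟫ + c ^ 2 * ‖g‖ ^ 2 := by
    rw [sub_right_comm, norm_sub_sq_real, real_inner_smul_right, norm_smul, Real.norm_of_nonneg hc]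
    ring
  have hlin : f p - f y ≤ ⟪p - y, g⟫ := by
    have := hg y
    rw [← neg_sub, inner_neg_right, real_inner_comm] at this
    linarith
  nlinarith [pow_le_pow_left₀ (norm_nonneg _) hx' 2, mul_le_mul_of_nonneg_left hlin hc]

end Subgradient

theorem sps_finite_sum_convergence_general {n : ℕ}
    (Ω : Set (EuclideanSpace ℝ (Fin n)))
    (hΩcomp : IsCompact Ω)
    (C1 C2 ζlo ζhi : ℝ)
    (hC1 : 0 < C1) (hζlo : 0 < ζlo)
    (x : ℕ → EuclideanSpace ℝ (Fin n)) (hxΩ : ∀ k, 1 ≤ k → x k ∈ Ω)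
    (fk : ℕ → EuclideanSpace ℝ (Fin n) → ℝ)
    (g : ℕ → EuclideanSpace ℝ (Fin n))
    (hsub : ∀ k, 1 ≤ k → ∀ z, fk k (x k) + ⟪g k, z - x k⟫ ≤ fk k z)
    (ζ α : ℕ → ℝ)
    (hζ : ∀ k, 1 ≤ k → ζ k ∈ Set.Icc ζlo ζhi)
    (hα : ∀ k : ℕ, 1 ≤ k → α k ∈ Set.Icc (C1 / (k : ℝ)) (C2 / (k : ℝ)))
    (hproj : ∀ k, 1 ≤ k → ∀ y ∈ Ω,
      ‖x (k + 1) - y‖ ≤ ‖(x k - (α k * ζ k) • g k) - y‖)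
    (f : EuclideanSpace ℝ (Fin n) → ℝ)
    (hfconv : ConvexOn ℝ Set.univ f)
    (hfull : ∃ K : ℕ, ∀ k, K ≤ k → fk k = f) :
    ∃ xstar ∈ Ω, f xstar = sInf (f '' Ω) ∧ Tendsto x atTop (nhds xstar) := by
  obtain ⟨K, hK⟩ := hfull
  have hf : Continuous f := continuousOn_univ.1 (hfconv.continuousOn isOpen_univ)
  obtain ⟨G, hG⟩ := exists_norm_le_of_hasSubgradientAt hf hΩcomp
  -- past `N`, `f_k = f` and `k ≥ 1`, so the bounds `C / k` carry no junk value at `k = 0`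
  set N := K + 1
  have hN (i : ℕ) : 1 ≤ i + N ∧ K ≤ i + N := by omega
  have hc (k : ℕ) (hk : 1 ≤ k) : α k * ζ k ∈ Set.Icc (C1 * ζlo / k) (C2 * ζhi / k) :=
    mul_mem_Icc_div (by exact_mod_cast hk) hC1 hζlo.le (hα k hk) (hζ k hk)
  have hc0 (k : ℕ) (hk : 1 ≤ k) : 0 ≤ α k * ζ k := (by positivity : (0 : ℝ) ≤ _).trans (hc k hk).1
  have hsubf (i : ℕ) : HasSubgradientAt f (g (i + N)) (x (i + N)) :=
    hK _ (hN i).2 ▸ hsub _ (hN i).1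
  have hnot := not_summable_of_div_le (mul_pos hC1 hζlo)
    (eventually_atTop.2 ⟨1, fun k hk => (hc k hk).1⟩)
  have hsq := summable_sq_of_le_div (eventually_atTop.2 ⟨1, fun k hk => ⟨hc0 k hk, (hc k hk).2⟩⟩)
  obtain ⟨xs, hxs, hmin, hlim⟩ := exists_isMinOn_tendsto_of_dist_sq_le (x := fun i => x (i + N))
    (c := fun i => α (i + N) * ζ (i + N)) (e := fun i => (α (i + N) * ζ (i + N)) ^ 2 * G ^ 2)
    hΩcomp hf.continuousOn (fun i => hxΩ _ (hN i).1) (fun i => hc0 _ (hN i).1)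
    ((summable_nat_add_iff N).not.2 hnot) (fun i => by positivity)
    (((summable_nat_add_iff N).2 hsq).mul_right _) fun i y hy => by
      simp only [dist_eq_norm, add_right_comm i 1 N]
      refine ((hsubf i).sq_norm_sub_le_of_norm_le (hc0 _ (hN i).1)
        (hproj _ (hN i).1 y hy)).trans ?_
      gcongr
      exact hG _ (hxΩ _ (hN i).1) _ (hsubf i)
  have hleast : IsLeast (f '' Ω) (f xs) := ⟨Set.mem_image_of_mem f hxs, Set.forall_mem_image.2 hmin⟩
  exact ⟨xs, hxs, hleast.csInf_eq.symm, (tendsto_add_atTop_iff_nat N).1 hlim⟩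

/-- Corollary 1 (finite sum problems): under the SPS iteration on a nonempty compact
convex set, if the full sample is eventually reached and retained (`f_k = f` for all
`k ≥ K`), then the iterates converge to a minimizer of `f` on `Ω`. -/
theorem sps_finite_sum_convergence {n : ℕ}
    (Ω : Set (EuclideanSpace ℝ (Fin n)))
    (hΩne : Ω.Nonempty) (hΩcomp : IsCompact Ω) (hΩconv : Convex ℝ Ω)
    (C1 C2 ζlo ζhi : ℝ)
    (hC1 : 0 < C1) (hC12 : C1 ≤ C2) (hζlo : 0 < ζlo) (hζlohi : ζlo ≤ ζhi)
    (x : ℕ → EuclideanSpace ℝ (Fin n)) (hxΩ : ∀ k, 1 ≤ k → x k ∈ Ω)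
    (fk : ℕ → EuclideanSpace ℝ (Fin n) → ℝ)
    (hfkconv : ∀ k, ConvexOn ℝ Set.univ (fk k))
    (g : ℕ → EuclideanSpace ℝ (Fin n))
    (hsub : ∀ k, 1 ≤ k → ∀ z, fk k (x k) + ⟪g k, z - x k⟫ ≤ fk k z)
    (ζ α : ℕ → ℝ)
    (hζ : ∀ k, 1 ≤ k → ζ k ∈ Set.Icc ζlo ζhi)
    (hα : ∀ k : ℕ, 1 ≤ k → α k ∈ Set.Icc (C1 / (k : ℝ)) (C2 / (k : ℝ)))
    (hproj : ∀ k, 1 ≤ k → ∀ y ∈ Ω,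
      ‖x (k + 1) - y‖ ≤ ‖(x k - (α k * ζ k) • g k) - y‖)
    (f : EuclideanSpace ℝ (Fin n) → ℝ)
    (hfconv : ConvexOn ℝ Set.univ f)
    (hfull : ∃ K : ℕ, ∀ k, K ≤ k → fk k = f) :
    ∃ xstar ∈ Ω, f xstar = sInf (f '' Ω) ∧ Tendsto x atTop (nhds xstar) :=
  sps_finite_sum_convergence_general Ω hΩcomp C1 C2 ζlo ζhi hC1 hζlo x hxΩ fk g hsub ζ α hζ hα hproj
    f hfconv hfull
end

section
/- Under the SPS iteration on a nonempty closed convex set Ω ⊆ E, suppose f : E → ℝ is convex and continuous, x* ∈ Ω satisfies f(x*) ≤ f(y) for all y ∈ Ω, there is a bounded set B ⊆ E with x* ∈ B and x_k ∈ B for all k ≥ 1, there is G > 0 with ‖g_k‖ ≤ G for all k ≥ 1, and the errors e_k := sup_{x ∈ B} |f_k(x) − f(x)| satisfy e_k → 0 as k → ∞. Then liminf_{k→∞} f(x_k) = f(x*). -/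
open scoped RealInnerProductSpace
open Filter

/-! The squared distance `d_k = ‖x_k - x*‖²` satisfies the projected subgradient recursion
`d_{k+1} ≤ d_k - 2 t_k ⟪g_k, x_k - x*⟫ + t_k² G²` with `t_k = α_k ζ_k ≍ 1/k`, and the subgradient
inequality for `f_k`, corrected by the uniform errors `e_k → 0` on `B`, gives
`⟪g_k, x_k - x*⟫ ≥ f(x_k) - f(x*) - 2 e_k`. If `f(x_k)` stayed `ε` above `f(x*)`, the recursion would
make `d_k` decrease by `≍ ε/k` at each step while the error terms `≍ 1/k²` are summable, so the
divergent harmonic series would drive `d_k` below zero. -/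

lemma Bornology.IsBounded.image_of_continuous {X Y : Type*} [PseudoMetricSpace X] [ProperSpace X]
    [PseudoMetricSpace Y] {h : X → Y} (hh : Continuous h) {B : Set X}
    (hB : Bornology.IsBounded B) : Bornology.IsBounded (h '' B) :=
  (hB.isCompact_closure.image hh).isBounded.subset (Set.image_mono subset_closure)

theorem liminf_eq_of_eventually_ge_of_frequently_le {ι : Type*} {l : Filter ι} [l.NeBot]
    {u : ι → ℝ} {m : ℝ} (hbdd : IsBoundedUnder (· ≤ ·) l u) (hge : ∀ᶠ i in l, m ≤ u i)
    (hfreq : ∀ ε > 0, ∃ᶠ i in l, u i ≤ m + ε) : liminf u l = m :=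
  le_antisymm
    (le_of_forall_pos_le_add fun ε hε =>
      liminf_le_of_frequently_le (hfreq ε hε) (isBoundedUnder_of_eventually_ge hge))
    (le_liminf_of_le hbdd.isCoboundedUnder_ge hge)

theorem summable_of_le_sub_add {d a b : ℕ → ℝ} (hd : ∀ k, 0 ≤ d k) (ha : ∀ k, 0 ≤ a k)
    (hb : Summable b) (hb0 : ∀ k, 0 ≤ b k) (h : ∀ k, d (k + 1) ≤ d k - a k + b k) :
    Summable a := by
  refine summable_of_sum_range_le (c := d 0 + ∑' k, b k) ha fun m => ?_
  calc ∑ k ∈ Finset.range m, a k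
      ≤ ∑ k ∈ Finset.range m, (d k - d (k + 1) + b k) :=
        Finset.sum_le_sum fun k _ => by linarith [h k]
    _ = d 0 - d m + ∑ k ∈ Finset.range m, b k := by
        rw [Finset.sum_add_distrib, Finset.sum_range_sub']
    _ ≤ d 0 + ∑' k, b k := by
        linarith [hd m, hb.sum_le_tsum (Finset.range m) fun k _ => hb0 k]

theorem summable_of_eventually_le_sub_add {d a b : ℕ → ℝ} (hd : ∀ k, 0 ≤ d k)
    (ha : ∀ k, 0 ≤ a k) (hb : Summable b) (hb0 : ∀ k, 0 ≤ b k)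
    (h : ∀ᶠ k in atTop, d (k + 1) ≤ d k - a k + b k) : Summable a := by
  obtain ⟨N, hN⟩ := eventually_atTop.1 h
  refine (summable_nat_add_iff N).1 <| summable_of_le_sub_add (d := fun k => d (k + N))
    (fun k => hd _) (fun k => ha _) ((summable_nat_add_iff N).2 hb) (fun k => hb0 _) fun k => ?_
  simpa only [add_right_comm k 1 N] using hN (k + N) (Nat.le_add_left N k)

theorem Real.not_summable_const_div_natCast {c : ℝ} (hc : c ≠ 0) :
    ¬ Summable fun k : ℕ => c / k := fun h =>
  Real.not_summable_natCast_inv <| (summable_mul_left_iff hc).1 <| by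
    simpa only [div_eq_mul_inv] using h

theorem sq_norm_sub_le_of_projected_step {E : Type*} [NormedAddCommGroup E]
    [InnerProductSpace ℝ E] {x x' g y : E} {t δ : ℝ} (ht : 0 ≤ t)
    (hstep : ‖x' - y‖ ≤ ‖x - t • g - y‖) (hδ : δ ≤ ⟪g, x - y⟫) :
    ‖x' - y‖ ^ 2 ≤ ‖x - y‖ ^ 2 - 2 * t * δ + t ^ 2 * ‖g‖ ^ 2 := by
  have hexpand : ‖x - t • g - y‖ ^ 2 = ‖x - y‖ ^ 2 - 2 * t * ⟪g, x - y⟫ + t ^ 2 * ‖g‖ ^ 2 := by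
    rw [show x - t • g - y = (x - y) - t • g by abel, norm_sub_sq_real, real_inner_smul_right,
      real_inner_comm, norm_smul, mul_pow, Real.norm_eq_abs, sq_abs]
    ring
  have := mul_le_mul_of_nonneg_left hδ ht
  calc ‖x' - y‖ ^ 2 ≤ ‖x - t • g - y‖ ^ 2 := by gcongr
    _ ≤ _ := by rw [hexpand]; linarith

theorem sub_sub_two_mul_le_inner_of_subgradient {E : Type*} [NormedAddCommGroup E]
    [InnerProductSpace ℝ E] {φ ψ : E → ℝ} {g x y : E} {ε : ℝ}
    (hsub : φ x + ⟪g, y - x⟫ ≤ φ y) (hx : |φ x - ψ x| ≤ ε) (hy : |φ y - ψ y| ≤ ε) :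
    ψ x - ψ y - 2 * ε ≤ ⟪g, x - y⟫ := by
  rw [← neg_sub x y, inner_neg_right] at hsub
  linarith [abs_le.1 hx, abs_le.1 hy]

theorem frequently_inner_sub_lt_of_harmonic_steps {E : Type*} [NormedAddCommGroup E]
    [InnerProductSpace ℝ E] {x g : ℕ → E} {y : E} {t : ℕ → ℝ} {a b G δ : ℝ}
    (ha : 0 < a) (hδ : 0 < δ) (ht : ∀ᶠ k : ℕ in atTop, t k ∈ Set.Icc (a / k) (b / k))
    (hg : ∀ᶠ k in atTop, ‖g k‖ ≤ G)
    (hstep : ∀ᶠ k in atTop, ‖x (k + 1) - y‖ ≤ ‖x k - t k • g k - y‖) :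
    ∃ᶠ k in atTop, ⟪g k, x k - y⟫ < δ := by
  intro hgap
  simp only [not_lt] at hgap
  have hdescent : ∀ᶠ k : ℕ in atTop,
      ‖x (k + 1) - y‖ ^ 2 ≤ ‖x k - y‖ ^ 2 - 2 * a * δ / k + (b * G) ^ 2 / k ^ 2 := by
    filter_upwards [ht, hg, hstep, hgap] with k htk hgk hstepk hgapk
    have htk0 : 0 ≤ t k := (div_nonneg ha.le k.cast_nonneg).trans htk.1
    calc _ ≤ ‖x k - y‖ ^ 2 - 2 * t k * δ + t k ^ 2 * ‖g k‖ ^ 2 :=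
          sq_norm_sub_le_of_projected_step htk0 hstepk hgapk
      _ ≤ ‖x k - y‖ ^ 2 - 2 * (a / k) * δ + (b / k) ^ 2 * G ^ 2 := by
          gcongr
          exacts [htk.1, htk.2]
      _ = _ := by ring
  have hsq : Summable fun k : ℕ => (b * G) ^ 2 / k ^ 2 := by
    simpa only [div_eq_mul_inv] using (Real.summable_nat_pow_inv.2 one_lt_two).mul_left ((b * G) ^ 2)
  exact Real.not_summable_const_div_natCast (by positivity) <|
    summable_of_eventually_le_sub_add (d := fun k => ‖x k - y‖ ^ 2) (fun k => sq_nonneg _)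
      (fun k => by positivity) hsq (fun k => by positivity) hdescent

theorem sps_liminf_optimal_unbounded_general {n : ℕ}
    (Ω : Set (EuclideanSpace ℝ (Fin n)))
    (C1 C2 ζlo ζhi : ℝ)
    (hC1 : 0 < C1) (hζlo : 0 < ζlo)
    (x : ℕ → EuclideanSpace ℝ (Fin n)) (hxΩ : ∀ k, 1 ≤ k → x k ∈ Ω)
    (fk : ℕ → EuclideanSpace ℝ (Fin n) → ℝ)
    (hfkconv : ∀ k, ConvexOn ℝ Set.univ (fk k))
    (g : ℕ → EuclideanSpace ℝ (Fin n))
    (hsub : ∀ k, 1 ≤ k → ∀ z, fk k (x k) + ⟪g k, z - x k⟫ ≤ fk k z)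
    (ζ α : ℕ → ℝ)
    (hζ : ∀ k, 1 ≤ k → ζ k ∈ Set.Icc ζlo ζhi)
    (hα : ∀ k : ℕ, 1 ≤ k → α k ∈ Set.Icc (C1 / (k : ℝ)) (C2 / (k : ℝ)))
    (hproj : ∀ k, 1 ≤ k → ∀ y ∈ Ω,
      ‖x (k + 1) - y‖ ≤ ‖(x k - (α k * ζ k) • g k) - y‖)
    (f : EuclideanSpace ℝ (Fin n) → ℝ)
    (hfcont : Continuous f)
    (xstar : EuclideanSpace ℝ (Fin n)) (hxstarΩ : xstar ∈ Ω)
    (hmin : ∀ y ∈ Ω, f xstar ≤ f y)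
    (B : Set (EuclideanSpace ℝ (Fin n))) (hB : Bornology.IsBounded B)
    (hxstarB : xstar ∈ B) (hxB : ∀ k, 1 ≤ k → x k ∈ B)
    (G : ℝ) (hgbd : ∀ k, 1 ≤ k → ‖g k‖ ≤ G)
    (e : ℕ → ℝ)
    (he : ∀ k, e k = sSup ((fun z => |fk k z - f z|) '' B))
    (helim : Tendsto e atTop (nhds 0)) :
    liminf (fun k => f (x k)) atTop = f xstar := by
  have herr : ∀ k, ∀ z ∈ B, |fk k z - f z| ≤ e k := fun k z hz => by
    have hfk : Continuous (fk k) := continuousOn_univ.1 ((hfkconv k).continuousOn isOpen_univ)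
    rw [he k]
    exact le_csSup (hB.image_of_continuous (hfk.sub hfcont).abs).bddAbove ⟨z, hz, rfl⟩
  obtain ⟨M, hM⟩ := (hB.image_of_continuous hfcont).bddAbove
  refine liminf_eq_of_eventually_ge_of_frequently_le
    (isBoundedUnder_of_eventually_le (eventually_atTop.2 ⟨1, fun k hk => hM ⟨_, hxB k hk, rfl⟩⟩))
    (eventually_atTop.2 ⟨1, fun k hk => hmin _ (hxΩ k hk)⟩) fun ε hε => ?_
  have hsteps : ∀ᶠ k : ℕ in atTop, α k * ζ k ∈ Set.Icc (C1 * ζlo / k) (C2 * ζhi / k) := by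
    filter_upwards [eventually_ge_atTop 1] with k hk
    obtain ⟨hαlo, hαhi⟩ := hα k hk
    obtain ⟨hζlo', hζhi'⟩ := hζ k hk
    have hα0 : 0 ≤ α k := (div_nonneg hC1.le k.cast_nonneg).trans hαlo
    rw [mul_div_right_comm, mul_div_right_comm C2]
    exact ⟨mul_le_mul hαlo hζlo' hζlo.le hα0, mul_le_mul hαhi hζhi' (hζlo.le.trans hζlo')
      (hα0.trans hαhi)⟩
  have hinner := frequently_inner_sub_lt_of_harmonic_steps (y := xstar) (δ := ε / 2)
    (by positivity) (by positivity) hsteps (eventually_atTop.2 ⟨1, hgbd⟩)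
    (eventually_atTop.2 ⟨1, fun k hk => hproj k hk xstar hxstarΩ⟩)
  refine (hinner.and_eventually ((helim.eventually (gt_mem_nhds (by positivity : 0 < ε / 4))).and
    (eventually_ge_atTop 1))).mono fun k ⟨hk, hek, hk1⟩ => ?_
  have := sub_sub_two_mul_le_inner_of_subgradient (hsub k hk1 xstar) (herr k _ (hxB k hk1))
    (herr k _ hxstarB)
  linarith

/-- Theorem 3, part 1 (pathwise): SPS iteration on a nonempty closed convex set with
iterates staying in a bounded set `B` containing a minimizer `x*`; if the SAA error
over `B` tends to zero, then `liminf f(x_k) = f(x*)`. -/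
theorem sps_liminf_optimal_unbounded {n : ℕ}
    (Ω : Set (EuclideanSpace ℝ (Fin n)))
    (hΩne : Ω.Nonempty) (hΩclosed : IsClosed Ω) (hΩconv : Convex ℝ Ω)
    (C1 C2 ζlo ζhi : ℝ)
    (hC1 : 0 < C1) (hC12 : C1 ≤ C2) (hζlo : 0 < ζlo) (hζlohi : ζlo ≤ ζhi)
    (x : ℕ → EuclideanSpace ℝ (Fin n)) (hxΩ : ∀ k, 1 ≤ k → x k ∈ Ω)
    (fk : ℕ → EuclideanSpace ℝ (Fin n) → ℝ)
    (hfkconv : ∀ k, ConvexOn ℝ Set.univ (fk k))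
    (g : ℕ → EuclideanSpace ℝ (Fin n))
    (hsub : ∀ k, 1 ≤ k → ∀ z, fk k (x k) + ⟪g k, z - x k⟫ ≤ fk k z)
    (ζ α : ℕ → ℝ)
    (hζ : ∀ k, 1 ≤ k → ζ k ∈ Set.Icc ζlo ζhi)
    (hα : ∀ k : ℕ, 1 ≤ k → α k ∈ Set.Icc (C1 / (k : ℝ)) (C2 / (k : ℝ)))
    (hproj : ∀ k, 1 ≤ k → ∀ y ∈ Ω,
      ‖x (k + 1) - y‖ ≤ ‖(x k - (α k * ζ k) • g k) - y‖)
    (f : EuclideanSpace ℝ (Fin n) → ℝ)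
    (hfconv : ConvexOn ℝ Set.univ f) (hfcont : Continuous f)
    (xstar : EuclideanSpace ℝ (Fin n)) (hxstarΩ : xstar ∈ Ω)
    (hmin : ∀ y ∈ Ω, f xstar ≤ f y)
    (B : Set (EuclideanSpace ℝ (Fin n))) (hB : Bornology.IsBounded B)
    (hxstarB : xstar ∈ B) (hxB : ∀ k, 1 ≤ k → x k ∈ B)
    (G : ℝ) (hG : 0 < G) (hgbd : ∀ k, 1 ≤ k → ‖g k‖ ≤ G)
    (e : ℕ → ℝ)
    (he : ∀ k, e k = sSup ((fun z => |fk k z - f z|) '' B))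
    (helim : Tendsto e atTop (nhds 0)) :
    liminf (fun k => f (x k)) atTop = f xstar :=
  sps_liminf_optimal_unbounded_general Ω C1 C2 ζlo ζhi hC1 hζlo x hxΩ fk hfkconv g hsub ζ α hζ hα
    hproj f hfcont xstar hxstarΩ hmin B hB hxstarB hxB G hgbd e he helim
end

section
/- Under the SPS iteration on a nonempty closed convex set Ω ⊆ E, suppose f : E → ℝ is convex and continuous, x* ∈ Ω satisfies f(x*) ≤ f(y) for all y ∈ Ω, there is a bounded set B ⊆ E with x* ∈ B and x_k ∈ B for all k ≥ 1, there is G > 0 with ‖g_k‖ ≤ G for all k ≥ 1, and the errors e_k := sup_{x ∈ B} |f_k(x) − f(x)| satisfy Σ_{k≥1} e_k/k < ∞. Then there exists x̂ ∈ Ω with f(x̂) = f(x*) such that x_k → x̂ as k → ∞. -/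
/-!
For every `y ∈ Ω ∩ closure B`, where the sample error is at most `e_k`, the projected step gives
`‖x_{k+1} - y‖² + 2 s_k (f x_k - f y) ≤ ‖x_k - y‖² + 4 s_k e_k + s_k² G²`
with `s_k = α_k ζ_k ≍ 1/k`, and the perturbation on the right is summable. Taking `y = x*` gives
`Σ s_k (f x_k - f x*) < ∞`; as `Σ s_k = ∞`, `f x_k` comes arbitrarily close to `f x*` infinitely
often, so by compactness of `Ω ∩ closure B` some subsequence converges to a minimiser `x̂`. Taking `y = x̂`, the distances
`‖x_k - x̂‖` converge, and their limit is `0` because it is `0` along that subsequence.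
-/

open scoped RealInnerProductSpace
open Filter Topology Set

theorem exists_tendsto_of_le_add_of_summable {a b : ℕ → ℝ} (ha : BddBelow (range a))
    (hb : Summable b) (hab : ∀ k, a (k + 1) ≤ a k + b k) : ∃ L, Tendsto a atTop (𝓝 L) := by
  set T : ℕ → ℝ := fun k => ∑' j, b (j + k)
  have hT : Tendsto T atTop (𝓝 0) := tendsto_sum_nat_add b
  have hTsucc (k : ℕ) : T k = b k + T (k + 1) := by
    simp only [T, ((summable_nat_add_iff k).2 hb).tsum_eq_zero_add, zero_add, add_right_comm _ 1 k,
      add_assoc]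
  have hanti : Antitone (a + T) :=
    antitone_nat_of_succ_le fun k => by simp only [Pi.add_apply]; linarith [hab k, hTsucc k]
  obtain ⟨m, hm⟩ := ha
  obtain ⟨m', hm'⟩ := hT.bddBelow_range
  have hbdd : BddBelow (range (a + T)) := ⟨m + m', by
    rintro _ ⟨k, rfl⟩
    exact add_le_add (hm ⟨k, rfl⟩) (hm' ⟨k, rfl⟩)⟩
  exact ⟨_, by simpa using (tendsto_atTop_ciInf hanti hbdd).sub hT⟩

open Finset in
theorem summable_of_le_add_of_summable {a b c : ℕ → ℝ} (ha : ∀ k, 0 ≤ a k) (hc : ∀ k, 0 ≤ c k)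
    (hb : Summable b) (habc : ∀ k, a (k + 1) + c k ≤ a k + b k) : Summable c := by
  obtain ⟨M, hM⟩ := hb.hasSum.tendsto_sum_nat.bddAbove_range
  refine summable_of_sum_range_le (c := a 0 + M) hc fun N => ?_
  calc ∑ i ∈ range N, c i ≤ ∑ i ∈ range N, (a i - a (i + 1) + b i) :=
        sum_le_sum fun i _ => by linarith [habc i]
    _ = a 0 - a N + ∑ i ∈ range N, b i := by rw [sum_add_distrib, sum_range_sub']
    _ ≤ a 0 + M := by linarith [ha N, hM ⟨N, rfl⟩]

theorem frequently_lt_of_summable_mul_s5 {w c : ℕ → ℝ} (hw0 : ∀ k, 0 ≤ w k) (hw : ¬Summable w)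
    (hwc : Summable fun k => w k * c k) {ε : ℝ} (hε : 0 < ε) : ∃ᶠ k in atTop, c k < ε := by
  refine fun hge => hw ((hwc.div_const ε).of_norm_bounded_eventually_nat ?_)
  filter_upwards [hge] with k hk
  rw [Real.norm_of_nonneg (hw0 k), le_div_iff₀ hε]
  exact mul_le_mul_of_nonneg_left (not_lt.1 hk) (hw0 k)

theorem not_summable_of_div_succ_le {s : ℕ → ℝ} {c : ℝ} (hc : 0 < c)
    (hs : ∀ k, c / (k + 1 : ℕ) ≤ s k) : ¬Summable s := fun h => by
  have hharm : Summable fun k => 1 / ((k + 1 : ℕ) : ℝ) :=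
    ((h.of_nonneg_of_le (fun k => by positivity) hs).div_const c).congr fun k => by field_simp
  exact Real.not_summable_one_div_natCast ((summable_nat_add_iff 1).1 hharm)

theorem summable_mul_of_le_div_succ {s e : ℕ → ℝ} {D : ℝ} (hs0 : ∀ k, 0 ≤ s k)
    (hs : ∀ k, s k ≤ D / (k + 1 : ℕ)) (he0 : ∀ k, 0 ≤ e k)
    (he : Summable fun k => e k / (k + 1 : ℕ)) : Summable fun k => s k * e k :=
  (he.mul_left D).of_nonneg_of_le (fun k => mul_nonneg (hs0 k) (he0 k)) fun k =>
    calc s k * e k ≤ D / (k + 1 : ℕ) * e k := mul_le_mul_of_nonneg_right (hs k) (he0 k)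
      _ = D * (e k / (k + 1 : ℕ)) := by ring

theorem summable_sq_of_le_div_succ {s : ℕ → ℝ} {D : ℝ} (hs0 : ∀ k, 0 ≤ s k)
    (hs : ∀ k, s k ≤ D / (k + 1 : ℕ)) : Summable fun k => s k ^ 2 := by
  have hinv : Summable fun k => 1 / ((k + 1 : ℕ) : ℝ) ^ 2 :=
    (summable_nat_add_iff 1).2 (Real.summable_one_div_nat_pow.2 one_lt_two)
  refine (hinv.mul_left (D ^ 2)).of_nonneg_of_le (fun k => sq_nonneg _) fun k => ?_
  calc s k ^ 2 ≤ (D / (k + 1 : ℕ)) ^ 2 := pow_le_pow_left₀ (hs0 k) (hs k) 2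
    _ = D ^ 2 * (1 / ((k + 1 : ℕ) : ℝ) ^ 2) := by ring

theorem mul_mem_Icc_mul_of_mem_Icc {a b c d x y : ℝ} (ha : 0 ≤ a) (hc : 0 ≤ c)
    (hx : x ∈ Icc a b) (hy : y ∈ Icc c d) : x * y ∈ Icc (a * c) (b * d) :=
  ⟨mul_le_mul hx.1 hy.1 hc (ha.trans hx.1),
    mul_le_mul hx.2 hy.2 (hc.trans hy.1) ((ha.trans hx.1).trans hx.2)⟩

theorem le_csSup_image_of_mem_closure {X : Type*} [PseudoMetricSpace X] [ProperSpace X]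
    {B : Set X} (hB : Bornology.IsBounded B) {h : X → ℝ} (hh : Continuous h) {z : X}
    (hz : z ∈ closure B) : h z ≤ sSup (h '' B) := by
  have hbdd : BddAbove (h '' B) :=
    (hB.isCompact_closure.image hh).bddAbove.mono (image_mono subset_closure)
  exact closure_minimal (fun y hy => le_csSup hbdd (mem_image_of_mem h hy))
    (isClosed_le hh continuous_const) hz

theorem IsCompact.exists_subseq_tendsto_of_frequently_lt {X : Type*} [TopologicalSpace X]
    [FirstCountableTopology X] {K : Set X} (hK : IsCompact K) {u : ℕ → X} (hu : ∀ k, u k ∈ K)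
    {f : X → ℝ} (hf : Continuous f) {m : ℝ} (hm : ∀ ε > 0, ∃ᶠ k in atTop, f (u k) < m + ε) :
    ∃ p ∈ K, f p ≤ m ∧ ∃ φ : ℕ → ℕ, StrictMono φ ∧ Tendsto (u ∘ φ) atTop (𝓝 p) := by
  obtain ⟨φ, hφ, hφlt⟩ :=
    extraction_forall_of_frequently fun j : ℕ => hm (1 / ((j : ℝ) + 1)) Nat.one_div_pos_of_nat
  obtain ⟨p, hpK, ψ, hψ, hlim⟩ := hK.tendsto_subseq fun j => hu (φ j)
  refine ⟨p, hpK, ?_, φ ∘ ψ, hφ.comp hψ, hlim⟩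
  have hbound : Tendsto (fun i => m + 1 / ((ψ i : ℝ) + 1)) atTop (𝓝 m) := by
    simpa using (tendsto_const_nhds (x := m)).add
      (tendsto_one_div_add_atTop_nhds_zero_nat.comp hψ.tendsto_atTop)
  exact le_of_tendsto_of_tendsto' ((hf.tendsto p).comp hlim) hbound fun i => (hφlt (ψ i)).le

theorem tendsto_of_dist_sq_le_add_of_subseq {X : Type*} [PseudoMetricSpace X] {u : ℕ → X}
    {p : X} {b : ℕ → ℝ} (hb : Summable b)
    (hub : ∀ k, dist (u (k + 1)) p ^ 2 ≤ dist (u k) p ^ 2 + b k) {φ : ℕ → ℕ}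
    (hφ : StrictMono φ) (hp : Tendsto (u ∘ φ) atTop (𝓝 p)) : Tendsto u atTop (𝓝 p) := by
  obtain ⟨L, hL⟩ := exists_tendsto_of_le_add_of_summable (a := fun k => dist (u k) p ^ 2)
    ⟨0, by rintro _ ⟨k, rfl⟩; exact sq_nonneg _⟩ hb hub
  have hL0 : L = 0 := tendsto_nhds_unique (hL.comp hφ.tendsto_atTop)
    (by simpa [Function.comp_def] using (tendsto_iff_dist_tendsto_zero.1 hp).pow 2)
  subst hL0
  refine tendsto_iff_dist_tendsto_zero.2 ?_
  simpa [Function.comp_def, Real.sqrt_sq dist_nonneg] using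
    (Real.continuous_sqrt.tendsto 0).comp hL

theorem sq_norm_sub_add_le_of_subgradient_step {E : Type*} [NormedAddCommGroup E]
    [InnerProductSpace ℝ E] {F : E → ℝ} {x x' g y : E} {s G : ℝ} (hs : 0 ≤ s) (hg : ‖g‖ ≤ G)
    (hF : F x + ⟪g, y - x⟫ ≤ F y) (hx' : ‖x' - y‖ ≤ ‖x - s • g - y‖) :
    ‖x' - y‖ ^ 2 + 2 * s * (F x - F y) ≤ ‖x - y‖ ^ 2 + s ^ 2 * G ^ 2 := by
  have hexpand : ‖x - s • g - y‖ ^ 2 = ‖x - y‖ ^ 2 - 2 * s * ⟪g, x - y⟫ + s ^ 2 * ‖g‖ ^ 2 := by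
    rw [sub_right_comm, norm_sub_sq_real, real_inner_smul_right, norm_smul, Real.norm_eq_abs,
      mul_pow, sq_abs, real_inner_comm]
    ring
  have hinner : ⟪g, y - x⟫ = -⟪g, x - y⟫ := by rw [← inner_neg_right, neg_sub]
  have hproj := pow_le_pow_left₀ (norm_nonneg _) hx' 2
  have hgap := mul_le_mul_of_nonneg_left (show F x - F y ≤ ⟪g, x - y⟫ by linarith) hs
  have hgrad := mul_le_mul_of_nonneg_left (pow_le_pow_left₀ (norm_nonneg _) hg 2) (sq_nonneg s)
  linarith

theorem sq_norm_sub_add_le_of_inexact_subgradient_step {E : Type*} [NormedAddCommGroup E]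
    [InnerProductSpace ℝ E] {F f : E → ℝ} {x x' g y : E} {s G ε : ℝ} (hs : 0 ≤ s)
    (hg : ‖g‖ ≤ G) (hF : F x + ⟪g, y - x⟫ ≤ F y) (hx' : ‖x' - y‖ ≤ ‖x - s • g - y‖)
    (hx : |F x - f x| ≤ ε) (hy : |F y - f y| ≤ ε) :
    ‖x' - y‖ ^ 2 + 2 * s * (f x - f y) ≤ ‖x - y‖ ^ 2 + (4 * (s * ε) + s ^ 2 * G ^ 2) := by
  have hstep := sq_norm_sub_add_le_of_subgradient_step hs hg hF hx'
  have hgap : f x - f y - 2 * ε ≤ F x - F y := by linarith [abs_le.1 hx, abs_le.1 hy]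
  linarith [mul_le_mul_of_nonneg_left hgap hs]

theorem exists_tendsto_of_dist_sq_descent {X : Type*} [PseudoMetricSpace X] {K : Set X}
    (hK : IsCompact K) {u : ℕ → X} (hu : ∀ k, u k ∈ K) {f : X → ℝ} (hf : Continuous f)
    {xstar : X} (hxstar : xstar ∈ K) (hmin : ∀ y ∈ K, f xstar ≤ f y) {s b : ℕ → ℝ}
    (hs0 : ∀ k, 0 ≤ s k) (hs : ¬Summable s) (hb : Summable b)
    (hdesc : ∀ y ∈ K, ∀ k,
      dist (u (k + 1)) y ^ 2 + 2 * s k * (f (u k) - f y) ≤ dist (u k) y ^ 2 + b k) :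
    ∃ p ∈ K, f p = f xstar ∧ Tendsto u atTop (𝓝 p) := by
  have hgap (k : ℕ) : 0 ≤ f (u k) - f xstar := sub_nonneg.2 (hmin _ (hu k))
  have hsum : Summable fun k => s k * (2 * (f (u k) - f xstar)) :=
    summable_of_le_add_of_summable (a := fun k => dist (u k) xstar ^ 2) (fun k => sq_nonneg _)
      (fun k => mul_nonneg (hs0 k) (by linarith [hgap k])) hb
      fun k => by linarith [hdesc xstar hxstar k]
  have hfreq (ε : ℝ) (hε : 0 < ε) : ∃ᶠ k in atTop, f (u k) < f xstar + ε :=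
    (frequently_lt_of_summable_mul_s5 hs0 hs hsum (by linarith : 0 < 2 * ε)).mono
      fun k hk => by linarith
  obtain ⟨p, hpK, hp, φ, hφ, hlim⟩ := hK.exists_subseq_tendsto_of_frequently_lt hu hf hfreq
  have hfp : f p = f xstar := le_antisymm hp (hmin p hpK)
  refine ⟨p, hpK, hfp, tendsto_of_dist_sq_le_add_of_subseq hb (fun k => ?_) hφ hlim⟩
  have hk := hdesc p hpK k
  rw [hfp] at hk
  linarith [mul_nonneg (hs0 k) (hgap k)]

theorem sps_convergence_unbounded_general {n : ℕ}
    (Ω : Set (EuclideanSpace ℝ (Fin n)))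
    (hΩclosed : IsClosed Ω)
    (C1 C2 ζlo ζhi : ℝ)
    (hC1 : 0 < C1) (hζlo : 0 < ζlo)
    (x : ℕ → EuclideanSpace ℝ (Fin n)) (hxΩ : ∀ k, 1 ≤ k → x k ∈ Ω)
    (fk : ℕ → EuclideanSpace ℝ (Fin n) → ℝ)
    (hfkconv : ∀ k, ConvexOn ℝ Set.univ (fk k))
    (g : ℕ → EuclideanSpace ℝ (Fin n))
    (hsub : ∀ k, 1 ≤ k → ∀ z, fk k (x k) + ⟪g k, z - x k⟫ ≤ fk k z)
    (ζ α : ℕ → ℝ)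
    (hζ : ∀ k, 1 ≤ k → ζ k ∈ Set.Icc ζlo ζhi)
    (hα : ∀ k : ℕ, 1 ≤ k → α k ∈ Set.Icc (C1 / (k : ℝ)) (C2 / (k : ℝ)))
    (hproj : ∀ k, 1 ≤ k → ∀ y ∈ Ω,
      ‖x (k + 1) - y‖ ≤ ‖(x k - (α k * ζ k) • g k) - y‖)
    (f : EuclideanSpace ℝ (Fin n) → ℝ)
    (hfcont : Continuous f)
    (xstar : EuclideanSpace ℝ (Fin n)) (hxstarΩ : xstar ∈ Ω)
    (hmin : ∀ y ∈ Ω, f xstar ≤ f y)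
    (B : Set (EuclideanSpace ℝ (Fin n))) (hB : Bornology.IsBounded B)
    (hxstarB : xstar ∈ B) (hxB : ∀ k, 1 ≤ k → x k ∈ B)
    (G : ℝ) (hgbd : ∀ k, 1 ≤ k → ‖g k‖ ≤ G)
    (e : ℕ → ℝ)
    (he : ∀ k, e k = sSup ((fun z => |fk k z - f z|) '' B))
    (hesum : Summable (fun k : ℕ => e k / k)) :
    ∃ xhat ∈ Ω, f xhat = f xstar ∧ Tendsto x atTop (nhds xhat) := by
  have hfk (k : ℕ) : Continuous (fk k) :=
    continuousOn_univ.1 ((hfkconv k).continuousOn isOpen_univ)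
  -- stated on `closure B` because the limit point need not lie in `B`
  have herr (k : ℕ) (z) (hz : z ∈ closure B) : |fk k z - f z| ≤ e k :=
    (he k).symm ▸ le_csSup_image_of_mem_closure hB ((hfk k).sub hfcont).abs hz
  have he0 (k : ℕ) : 0 ≤ e k := (abs_nonneg _).trans (herr k xstar (subset_closure hxstarB))
  -- the iteration starts at `k = 1`; below, `j` stands for `k = j + 1`
  set s : ℕ → ℝ := fun j => α (j + 1) * ζ (j + 1)
  have hs (j : ℕ) : s j ∈ Icc (C1 / (j + 1 : ℕ) * ζlo) (C2 / (j + 1 : ℕ) * ζhi) :=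
    mul_mem_Icc_mul_of_mem_Icc (by positivity) hζlo.le (hα _ le_add_self) (hζ _ le_add_self)
  have hs0 (j : ℕ) : 0 ≤ s j := le_trans (by positivity) (hs j).1
  have hsle (j : ℕ) : s j ≤ C2 * ζhi / (j + 1 : ℕ) := div_mul_eq_mul_div C2 _ ζhi ▸ (hs j).2
  obtain ⟨xhat, ⟨hxhatΩ, -⟩, hval, hlim⟩ := exists_tendsto_of_dist_sq_descent
    (u := fun j => x (j + 1)) (b := fun j => 4 * (s j * e (j + 1)) + s j ^ 2 * G ^ 2)
    (hB.isCompact_closure.inter_left hΩclosed)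
    (fun j => ⟨hxΩ _ le_add_self, subset_closure (hxB _ le_add_self)⟩) hfcont
    ⟨hxstarΩ, subset_closure hxstarB⟩ (fun y hy => hmin y hy.1) hs0
    (not_summable_of_div_succ_le (mul_pos hC1 hζlo) fun j =>
      div_mul_eq_mul_div C1 _ ζlo ▸ (hs j).1)
    (((summable_mul_of_le_div_succ hs0 hsle (fun j => he0 _)
      ((summable_nat_add_iff 1).2 hesum)).mul_left 4).add
      ((summable_sq_of_le_div_succ hs0 hsle).mul_right _))
    fun y hy j => by
      simpa only [dist_eq_norm] using sq_norm_sub_add_le_of_inexact_subgradient_step (hs0 j)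
        (hgbd _ le_add_self) (hsub _ le_add_self y) (hproj _ le_add_self y hy.1)
        (herr _ _ (subset_closure (hxB _ le_add_self))) (herr _ y hy.2)
  exact ⟨xhat, hxhatΩ, hval, (tendsto_add_atTop_iff_nat 1).1 hlim⟩

/-- Theorem 3, part 2 (pathwise): SPS iteration on a nonempty closed convex set with
iterates staying in a bounded set `B` containing a minimizer `x*`; if the SAA errors
over `B` satisfy `Σ e_k/k < ∞`, then the iterates converge to some minimizer. -/
theorem sps_convergence_unbounded {n : ℕ}
    (Ω : Set (EuclideanSpace ℝ (Fin n)))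
    (hΩne : Ω.Nonempty) (hΩclosed : IsClosed Ω) (hΩconv : Convex ℝ Ω)
    (C1 C2 ζlo ζhi : ℝ)
    (hC1 : 0 < C1) (hC12 : C1 ≤ C2) (hζlo : 0 < ζlo) (hζlohi : ζlo ≤ ζhi)
    (x : ℕ → EuclideanSpace ℝ (Fin n)) (hxΩ : ∀ k, 1 ≤ k → x k ∈ Ω)
    (fk : ℕ → EuclideanSpace ℝ (Fin n) → ℝ)
    (hfkconv : ∀ k, ConvexOn ℝ Set.univ (fk k))
    (g : ℕ → EuclideanSpace ℝ (Fin n))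
    (hsub : ∀ k, 1 ≤ k → ∀ z, fk k (x k) + ⟪g k, z - x k⟫ ≤ fk k z)
    (ζ α : ℕ → ℝ)
    (hζ : ∀ k, 1 ≤ k → ζ k ∈ Set.Icc ζlo ζhi)
    (hα : ∀ k : ℕ, 1 ≤ k → α k ∈ Set.Icc (C1 / (k : ℝ)) (C2 / (k : ℝ)))
    (hproj : ∀ k, 1 ≤ k → ∀ y ∈ Ω,
      ‖x (k + 1) - y‖ ≤ ‖(x k - (α k * ζ k) • g k) - y‖)
    (f : EuclideanSpace ℝ (Fin n) → ℝ)
    (hfconv : ConvexOn ℝ Set.univ f) (hfcont : Continuous f)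
    (xstar : EuclideanSpace ℝ (Fin n)) (hxstarΩ : xstar ∈ Ω)
    (hmin : ∀ y ∈ Ω, f xstar ≤ f y)
    (B : Set (EuclideanSpace ℝ (Fin n))) (hB : Bornology.IsBounded B)
    (hxstarB : xstar ∈ B) (hxB : ∀ k, 1 ≤ k → x k ∈ B)
    (G : ℝ) (hG : 0 < G) (hgbd : ∀ k, 1 ≤ k → ‖g k‖ ≤ G)
    (e : ℕ → ℝ)
    (he : ∀ k, e k = sSup ((fun z => |fk k z - f z|) '' B))
    (hesum : Summable (fun k : ℕ => e k / k)) :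
    ∃ xhat ∈ Ω, f xhat = f xstar ∧ Tendsto x atTop (nhds xhat) :=
  sps_convergence_unbounded_general Ω hΩclosed C1 C2 ζlo ζhi hC1 hζlo x hxΩ fk hfkconv g hsub ζ α hζ
    hα hproj f hfcont xstar hxstarΩ hmin B hB hxstarB hxB G hgbd e he hesum
end

section
/- Under the SPS iteration on a nonempty closed convex set Ω ⊆ E, suppose f : E → ℝ satisfies f(x*) ≤ f(x_k) for all k ≥ 1 for some x* ∈ Ω, there is G > 0 with ‖g_k‖ ≤ G for all k ≥ 1, and the errors ē_k := |f_k(x_k) − f(x_k)| + |f_k(x*) − f(x*)| satisfy Σ_{k≥1} ē_k/k < ∞. Then the iterate sequence is bounded: there exists C5 > 0 such that ‖x_k − x*‖ ≤ C5 for all k ≥ 1. -/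
open scoped RealInnerProductSpace

/-!
Since `x*` minimises `f` along the iterates, the subgradient inequality for `f_k` at `x_k` gives
`⟪g_k, x_k - x*⟫ ≥ -ē_k`. Expanding the square of the (nonexpansive) projected step then yields
`‖x_{k+1} - x*‖² ≤ ‖x_k - x*‖² + 2 a_k ē_k + a_k² G²` with `a_k = C2 ζ̄ / k`, and the perturbation
terms are summable, so the squared distances stay below `‖x_1 - x*‖²` plus the sum of the series.
-/

lemma le_add_tsum_of_le_add {u c : ℕ → ℝ} {m : ℕ} (hc : Summable c) (hc0 : ∀ j, 0 ≤ c j)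
    (hu : ∀ k ≥ m, u (k + 1) ≤ u k + c k) : ∀ k ≥ m, u k ≤ u m + ∑' j, c j := by
  have partial_sum : ∀ k ≥ m, u k ≤ u m + ∑ j ∈ Finset.Ico m k, c j := by
    intro k hk
    induction k, hk using Nat.le_induction with
    | base => simp
    | succ k hk ih =>
      rw [Finset.sum_Ico_succ_top hk]
      linarith [hu k hk]
  intro k hk
  linarith [partial_sum k hk, hc.sum_le_tsum (Finset.Ico m k) fun j _ => hc0 j]

section InnerProductSpace

variable {E : Type*} [NormedAddCommGroup E] [InnerProductSpace ℝ E]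

lemma neg_abs_add_abs_le_inner_of_subgradient {φ f : E → ℝ} {x y g : E}
    (hsub : φ x + ⟪g, y - x⟫ ≤ φ y) (hmin : f y ≤ f x) :
    -(|φ x - f x| + |φ y - f y|) ≤ ⟪g, x - y⟫ := by
  have hflip : ⟪g, x - y⟫ = -⟪g, y - x⟫ := by rw [← inner_neg_right, neg_sub]
  linarith [neg_abs_le (φ x - f x), le_abs_self (φ y - f y)]

lemma sq_norm_sub_le_of_step {x x' y g : E} {s a e G : ℝ}
    (hstep : ‖x' - y‖ ≤ ‖x - s • g - y‖) (hs : 0 ≤ s) (hsa : s ≤ a) (hg : ‖g‖ ≤ G)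
    (he : 0 ≤ e) (hinner : -e ≤ ⟪g, x - y⟫) :
    ‖x' - y‖ ^ 2 ≤ ‖x - y‖ ^ 2 + 2 * a * e + (a * G) ^ 2 := by
  have hexpand : ‖x - s • g - y‖ ^ 2 = ‖x - y‖ ^ 2 - 2 * s * ⟪g, x - y⟫ + (s * ‖g‖) ^ 2 := by
    rw [sub_right_comm, norm_sub_sq_real, real_inner_smul_right, real_inner_comm, norm_smul,
      Real.norm_of_nonneg hs]
    ring
  have hsg : s * ‖g‖ ≤ a * G := mul_le_mul hsa hg (norm_nonneg g) (hs.trans hsa)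
  calc ‖x' - y‖ ^ 2 ≤ ‖x - s • g - y‖ ^ 2 := pow_le_pow_left₀ (norm_nonneg _) hstep 2
    _ = ‖x - y‖ ^ 2 - 2 * s * ⟪g, x - y⟫ + (s * ‖g‖) ^ 2 := hexpand
    _ ≤ ‖x - y‖ ^ 2 + 2 * a * e + (a * G) ^ 2 := by
      gcongr ?_ + ?_
      · nlinarith [mul_le_mul_of_nonneg_left hinner hs, mul_le_mul_of_nonneg_right hsa he]
      · exact pow_le_pow_left₀ (mul_nonneg hs (norm_nonneg g)) hsg 2

end InnerProductSpace

lemma summable_step_error {e : ℕ → ℝ} (he : Summable fun k : ℕ => e k / k) (K G : ℝ) :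
    Summable fun k : ℕ => 2 * (K / k) * e k + (K / k * G) ^ 2 := by
  have hsq : Summable fun k : ℕ => ((k : ℝ) ^ 2)⁻¹ := Real.summable_nat_pow_inv.mpr one_lt_two
  exact ((he.mul_left (2 * K)).add (hsq.mul_left ((K * G) ^ 2))).congr fun k => by ring

theorem sps_iterates_bounded_general {n : ℕ}
    (Ω : Set (EuclideanSpace ℝ (Fin n)))
    (C1 C2 ζlo ζhi : ℝ)
    (hC1 : 0 < C1) (hC12 : C1 ≤ C2) (hζlo : 0 < ζlo) (hζlohi : ζlo ≤ ζhi)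
    (x : ℕ → EuclideanSpace ℝ (Fin n))
    (fk : ℕ → EuclideanSpace ℝ (Fin n) → ℝ)
    (g : ℕ → EuclideanSpace ℝ (Fin n))
    (hsub : ∀ k, 1 ≤ k → ∀ z, fk k (x k) + ⟪g k, z - x k⟫ ≤ fk k z)
    (ζ α : ℕ → ℝ)
    (hζ : ∀ k, 1 ≤ k → ζ k ∈ Set.Icc ζlo ζhi)
    (hα : ∀ k : ℕ, 1 ≤ k → α k ∈ Set.Icc (C1 / (k : ℝ)) (C2 / (k : ℝ)))
    (hproj : ∀ k, 1 ≤ k → ∀ y ∈ Ω,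
      ‖x (k + 1) - y‖ ≤ ‖(x k - (α k * ζ k) • g k) - y‖)
    (f : EuclideanSpace ℝ (Fin n) → ℝ)
    (xstar : EuclideanSpace ℝ (Fin n)) (hxstarΩ : xstar ∈ Ω)
    (hmin : ∀ k, 1 ≤ k → f xstar ≤ f (x k))
    (G : ℝ) (hgbd : ∀ k, 1 ≤ k → ‖g k‖ ≤ G)
    (ebar : ℕ → ℝ)
    (hebar : ∀ k, ebar k = |fk k (x k) - f (x k)| + |fk k xstar - f xstar|)
    (hesum : Summable (fun k : ℕ => ebar k / k)) :
    ∃ C5 > (0 : ℝ), ∀ k, 1 ≤ k → ‖x k - xstar‖ ≤ C5 := by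
  set c : ℕ → ℝ := fun k => 2 * (C2 * ζhi / k) * ebar k + (C2 * ζhi / k * G) ^ 2
  have hK : 0 ≤ C2 * ζhi := by nlinarith
  have hebar0 (k : ℕ) : 0 ≤ ebar k := hebar k ▸ by positivity
  have hc0 (k : ℕ) : 0 ≤ c k :=
    add_nonneg (mul_nonneg (mul_nonneg zero_le_two (div_nonneg hK k.cast_nonneg)) (hebar0 k))
      (sq_nonneg _)
  have hstep : ∀ k ≥ 1, ‖x (k + 1) - xstar‖ ^ 2 ≤ ‖x k - xstar‖ ^ 2 + c k := by
    intro k hk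
    obtain ⟨hαlo, hαhi⟩ := hα k hk
    obtain ⟨hζlo', hζhi'⟩ := hζ k hk
    have hα0 : 0 ≤ α k := le_trans (by positivity) hαlo
    have hs : α k * ζ k ≤ C2 * ζhi / k := by
      rw [mul_div_right_comm]
      exact mul_le_mul hαhi hζhi' (by linarith) (hα0.trans hαhi)
    have hinner : -ebar k ≤ ⟪g k, x k - xstar⟫ := hebar k ▸
      neg_abs_add_abs_le_inner_of_subgradient (hsub k hk xstar) (hmin k hk)
    exact (sq_norm_sub_le_of_step (hproj k hk xstar hxstarΩ) (mul_nonneg hα0 (by linarith)) hs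
      (hgbd k hk) (hebar0 k) hinner).trans_eq (add_assoc _ _ _)
  have hbound := le_add_tsum_of_le_add (u := fun k => ‖x k - xstar‖ ^ 2)
    (summable_step_error hesum _ G) hc0 hstep
  refine ⟨√(‖x 1 - xstar‖ ^ 2 + ∑' k, c k) + 1, by positivity, fun k hk => ?_⟩
  linarith [Real.le_sqrt_of_sq_le (hbound k hk)]

/-- Proposition 1: under the SPS iteration on a nonempty closed convex set, if
`f(x*) ≤ f(x_k)` for all `k ≥ 1`, the subgradients are uniformly bounded and the
SAA errors `ē_k` satisfy `Σ ē_k/k < ∞`, then the iterates are bounded. -/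
theorem sps_iterates_bounded {n : ℕ}
    (Ω : Set (EuclideanSpace ℝ (Fin n)))
    (hΩne : Ω.Nonempty) (hΩclosed : IsClosed Ω) (hΩconv : Convex ℝ Ω)
    (C1 C2 ζlo ζhi : ℝ)
    (hC1 : 0 < C1) (hC12 : C1 ≤ C2) (hζlo : 0 < ζlo) (hζlohi : ζlo ≤ ζhi)
    (x : ℕ → EuclideanSpace ℝ (Fin n)) (hxΩ : ∀ k, 1 ≤ k → x k ∈ Ω)
    (fk : ℕ → EuclideanSpace ℝ (Fin n) → ℝ)
    (hfkconv : ∀ k, ConvexOn ℝ Set.univ (fk k))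
    (g : ℕ → EuclideanSpace ℝ (Fin n))
    (hsub : ∀ k, 1 ≤ k → ∀ z, fk k (x k) + ⟪g k, z - x k⟫ ≤ fk k z)
    (ζ α : ℕ → ℝ)
    (hζ : ∀ k, 1 ≤ k → ζ k ∈ Set.Icc ζlo ζhi)
    (hα : ∀ k : ℕ, 1 ≤ k → α k ∈ Set.Icc (C1 / (k : ℝ)) (C2 / (k : ℝ)))
    (hproj : ∀ k, 1 ≤ k → ∀ y ∈ Ω,
      ‖x (k + 1) - y‖ ≤ ‖(x k - (α k * ζ k) • g k) - y‖)
    (f : EuclideanSpace ℝ (Fin n) → ℝ)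
    (xstar : EuclideanSpace ℝ (Fin n)) (hxstarΩ : xstar ∈ Ω)
    (hmin : ∀ k, 1 ≤ k → f xstar ≤ f (x k))
    (G : ℝ) (hG : 0 < G) (hgbd : ∀ k, 1 ≤ k → ‖g k‖ ≤ G)
    (ebar : ℕ → ℝ)
    (hebar : ∀ k, ebar k = |fk k (x k) - f (x k)| + |fk k xstar - f xstar|)
    (hesum : Summable (fun k : ℕ => ebar k / k)) :
    ∃ C5 > (0 : ℝ), ∀ k, 1 ≤ k → ‖x k - xstar‖ ≤ C5 :=
  sps_iterates_bounded_general Ω C1 C2 ζlo ζhi hC1 hC12 hζlo hζlohi x fk g hsub ζ α hζ hα hproj f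
    xstar hxstarΩ hmin G hgbd ebar hebar hesum
end
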